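/- arXiv:1105.3881 — 10 statements merged into one kernel-verified Lean document; each statement's English description precedes it below -/
import Mathlib

section
/- For λ ≥ 0 and pairwise distinct x_1,…,x_{k+1} ∈ (0,∞), the k-th divided difference of the function x ↦ (x−α)^k / ((x+λ)(α+λ)^k) (with fixed α ∈ (0,∞)) at the points x_1,…,x_{k+1} equals 1 / ∏_{i=1}^{k+1} (x_i + λ). -/
/-!
Write `f_m t = (t - α)^m / ((t + λ)(α + λ)^m)`. Then `f_{m+1} = (t - α)/(α + λ) · f_m`, and
the Leibniz rule for a divided difference of an affine function times `g` turns this into a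
recursion in `m`. Starting from the `n`-th divided difference `(-1)^n / ∏ (x_i + λ)` of
`f_0 = 1/(t + λ)`, it gives `(-1)^(n+m) / ∏ (x_i + λ)` for the `n`-th divided difference of
`f_m` whenever `m ≤ n`; the theorem is the case `m = n = k`.
-/

noncomputable def divDiff (f : ℝ → ℝ) : (k : ℕ) → (Fin (k + 1) → ℝ) → ℝ
  | 0, x => f (x 0)
  | k + 1, x =>
      (divDiff f k (fun i => x i.castSucc) - divDiff f k (fun i => x i.succ)) /
        (x 0 - x (Fin.last (k + 1)))

lemma sub_last_ne_zero {G : Type*} [AddGroup G] {k : ℕ} {x : Fin (k + 2) → G}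
    (hx : Function.Injective x) (i : Fin (k + 1)) :
    x i.castSucc - x (Fin.last (k + 1)) ≠ 0 :=
  sub_ne_zero.mpr (hx.ne (Fin.castSucc_lt_last i).ne)

lemma divDiff_affine_mul (a b : ℝ) (g : ℝ → ℝ) (k : ℕ) (x : Fin (k + 2) → ℝ)
    (hx : Function.Injective x) :
    divDiff (fun t => (a * t + b) * g t) (k + 1) x
      = (a * x 0 + b) * divDiff g (k + 1) x + a * divDiff g k (fun i => x i.succ) := by
  induction k with
  | zero =>
    have h01 := sub_last_ne_zero hx 0
    have hl : (Fin.last 1 : Fin 2) = 1 := rfl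
    simp only [divDiff, Fin.castSucc_zero, Fin.succ_zero_eq_one, hl] at h01 ⊢
    field_simp
    ring
  | succ k ih =>
    have h0L : x 0 - x (Fin.last (k + 2)) ≠ 0 := sub_last_ne_zero hx 0
    have h1L : x 1 - x (Fin.last (k + 2)) ≠ 0 := sub_last_ne_zero hx 1
    have h_tail : divDiff g (k + 1) (fun i => x i.succ)
        = ((divDiff g k fun i => x i.castSucc.succ) - divDiff g k fun i => x i.succ.succ) /
          (x 1 - x (Fin.last (k + 2))) := by
      rw [divDiff, Fin.succ_zero_eq_one, Fin.succ_last]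
    rw [divDiff, ih (fun i => x i.castSucc) (hx.comp (Fin.castSucc_injective _)),
      ih (fun i => x i.succ) (hx.comp (Fin.succ_injective _)),
      divDiff.eq_2 g (k + 1) x, h_tail]
    simp only [Fin.castSucc_zero, Fin.succ_zero_eq_one, Fin.succ_castSucc]
    field_simp
    ring

lemma prod_univ_castSucc_mul_eq_mul_prod_univ_succ {M : Type*} [CommMonoid M] {k : ℕ}
    (y : Fin (k + 2) → M) :
    (∏ i : Fin (k + 1), y i.castSucc) * y (Fin.last (k + 1))
      = y 0 * ∏ i : Fin (k + 1), y i.succ := by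
  rw [← Fin.prod_univ_castSucc, Fin.prod_univ_succ]

lemma divDiff_inv_add (c : ℝ) (k : ℕ) (x : Fin (k + 1) → ℝ) (hx : Function.Injective x)
    (hxc : ∀ i, x i + c ≠ 0) :
    divDiff (fun t => (t + c)⁻¹) k x = (-1) ^ k / ∏ i, (x i + c) := by
  induction k with
  | zero => simp [divDiff]
  | succ k ih =>
    rw [divDiff,
      ih (fun i => x i.castSucc) (hx.comp (Fin.castSucc_injective _)) fun i => hxc _,
      ih (fun i => x i.succ) (hx.comp (Fin.succ_injective _)) fun i => hxc _,
      Fin.prod_univ_castSucc fun i => x i + c]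
    have h0L := sub_last_ne_zero hx 0
    have hinit : ∏ i : Fin (k + 1), (x i.castSucc + c) ≠ 0 :=
      Finset.prod_ne_zero_iff.mpr fun i _ => hxc _
    have htail : ∏ i : Fin (k + 1), (x i.succ + c) ≠ 0 :=
      Finset.prod_ne_zero_iff.mpr fun i _ => hxc _
    have hL := hxc (Fin.last (k + 1))
    have hprod := prod_univ_castSucc_mul_eq_mul_prod_univ_succ fun i => x i + c
    simp only [Fin.castSucc_zero] at h0L hprod ⊢
    field_simp
    linear_combination -(-1) ^ k * hprod

lemma divDiff_pow_div_mul_pow (α c : ℝ) (hαc : α + c ≠ 0) (m : ℕ) {n : ℕ} (hmn : m ≤ n)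
    (x : Fin (n + 1) → ℝ) (hx : Function.Injective x) (hxc : ∀ i, x i + c ≠ 0) :
    divDiff (fun t => (t - α) ^ m / ((t + c) * (α + c) ^ m)) n x
      = (-1) ^ (n + m) / ∏ i, (x i + c) := by
  induction m generalizing n with
  | zero => simpa using divDiff_inv_add c n x hx hxc
  | succ m ih =>
    obtain ⟨n, rfl⟩ : ∃ n', n = n' + 1 := ⟨n - 1, by omega⟩
    have h_factor : (fun t => (t - α) ^ (m + 1) / ((t + c) * (α + c) ^ (m + 1)))
        = fun t => ((α + c)⁻¹ * t + -α / (α + c)) *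
            ((t - α) ^ m / ((t + c) * (α + c) ^ m)) := by
      funext t; simp only [div_eq_mul_inv, mul_inv, pow_succ]; ring
    rw [h_factor, divDiff_affine_mul _ _ _ _ x hx, ih (by omega) x hx hxc,
      ih (by omega) (fun i => x i.succ) (hx.comp (Fin.succ_injective _)) fun i => hxc _,
      Fin.prod_univ_succ]
    have htail : ∏ i : Fin (n + 1), (x i.succ + c) ≠ 0 :=
      Finset.prod_ne_zero_iff.mpr fun i _ => hxc _
    have h0 := hxc 0
    field_simp
    ring

theorem divDiff_kernel_zero_infty (k : ℕ) (lam : ℝ) (hlam : 0 ≤ lam)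
    (α : ℝ) (hα : α ∈ Set.Ioi (0 : ℝ))
    (x : Fin (k + 1) → ℝ) (hx : Function.Injective x)
    (hx' : ∀ i, x i ∈ Set.Ioi (0 : ℝ)) :
    divDiff (fun t => (t - α) ^ k / ((t + lam) * (α + lam) ^ k)) k x
      = 1 / ∏ i, (x i + lam) := by
  have hαlam : α + lam ≠ 0 := by have := hα.out; positivity
  have hxlam : ∀ i, x i + lam ≠ 0 := fun i => by have := (hx' i).out; positivity
  rw [divDiff_pow_div_mul_pow α lam hαlam k le_rfl x hx hxlam, Even.neg_one_pow ⟨k, rfl⟩]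
end

section
/- Let k ≥ 2 and suppose f : (a,b) → ℝ is k-tone, i.e., f^[k](x_0,…,x_k) ≥ 0 for all pairwise distinct x_0,…,x_k in (a,b). Then f is of class C^{k−2} on (a,b) and f^{(k−2)} is convex on (a,b). -/
open Finset Filter Topology

noncomputable def divDiffFinset (f : ℝ → ℝ) (s : Finset ℝ) : ℝ :=
  ∑ x ∈ s, f x / ∏ y ∈ s.erase x, (x - y)

section divDiffFinset

variable (f : ℝ → ℝ)

@[simp]
lemma divDiffFinset_singleton (c : ℝ) : divDiffFinset f {c} = f c := by
  simp [divDiffFinset]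

lemma divDiffFinset_erase {s : Finset ℝ} {v : ℝ} (hv : v ∈ s) :
    divDiffFinset f (s.erase v) = ∑ x ∈ s, f x * (x - v) / ∏ y ∈ s.erase x, (x - y) := by
  rw [← add_sum_erase _ _ hv, sub_self, mul_zero, zero_div, zero_add, divDiffFinset]
  refine sum_congr rfl fun x hx => ?_
  have hvx : v ∈ s.erase x := mem_erase.mpr ⟨(ne_of_mem_erase hx).symm, hv⟩
  rw [← mul_prod_erase _ _ hvx, erase_right_comm, mul_comm (f x),
    mul_div_mul_left _ _ (sub_ne_zero.mpr (ne_of_mem_erase hx))]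

theorem divDiffFinset_eq_div_sub {s : Finset ℝ} {u v : ℝ} (hu : u ∈ s) (hv : v ∈ s) (huv : u ≠ v) :
    divDiffFinset f s =
      (divDiffFinset f (s.erase v) - divDiffFinset f (s.erase u)) / (u - v) := by
  rw [divDiffFinset_erase f hv, divDiffFinset_erase f hu, ← sum_sub_distrib,
    eq_div_iff (sub_ne_zero.mpr huv), divDiffFinset, sum_mul]
  refine sum_congr rfl fun x _ => ?_
  rw [← sub_div, div_mul_eq_mul_div]
  ring_nf

lemma divDiffFinset_pair {u v : ℝ} (huv : u ≠ v) : divDiffFinset f {u, v} = slope f u v := by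
  rw [divDiffFinset_eq_div_sub f (mem_insert_self u {v}) (by simp) huv, erase_insert_of_ne huv,
    erase_singleton, insert_empty, erase_insert (by simpa using huv), divDiffFinset_singleton,
    divDiffFinset_singleton, slope_def_field, ← neg_div_neg_eq, neg_sub, neg_sub]

lemma divDiffFinset_const (c : ℝ) {s : Finset ℝ} (hs : 2 ≤ s.card) :
    divDiffFinset (fun _ => c) s = 0 := by
  induction s using strongInduction with
  | H s ih =>
    obtain ⟨u, hu, v, hv, huv⟩ := one_lt_card.mp hs
    rcases hs.eq_or_lt with h2 | h2
    · obtain ⟨x, y, hxy, rfl⟩ := card_eq_two.mp h2.symm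
      simp [divDiffFinset_pair _ hxy, slope_def_field]
    · rw [divDiffFinset_eq_div_sub _ hu hv huv,
        ih _ (erase_ssubset hv) (by rw [card_erase_of_mem hv]; omega),
        ih _ (erase_ssubset hu) (by rw [card_erase_of_mem hu]; omega), sub_self, zero_div]

lemma divDiffFinset_sub (g : ℝ → ℝ) (s : Finset ℝ) :
    divDiffFinset (fun x => f x - g x) s = divDiffFinset f s - divDiffFinset g s := by
  simp only [divDiffFinset, sub_div, sum_sub_distrib]

lemma divDiffFinset_insert_of_eq_zero {s : Finset ℝ} {c : ℝ} (hc : c ∉ s) (hf : f c = 0) :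
    divDiffFinset f (insert c s) = divDiffFinset (fun x => f x / (x - c)) s := by
  rw [divDiffFinset, sum_insert hc, hf, zero_div, zero_add, divDiffFinset]
  refine sum_congr rfl fun x hx => ?_
  rw [erase_insert_of_ne (ne_of_mem_of_not_mem hx hc).symm,
    prod_insert fun h => hc (mem_of_mem_erase h), div_div, mul_comm (x - c)]

theorem divDiffFinset_slope {s : Finset ℝ} {c : ℝ} (hc : c ∉ s) (hs : s.Nonempty) :
    divDiffFinset (slope f c) s = divDiffFinset f (insert c s) := by
  have hcard : 2 ≤ (insert c s).card := by
    rw [card_insert_of_notMem hc]; have := hs.card_pos; omega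
  rw [← sub_zero (divDiffFinset f _), ← divDiffFinset_const (f c) hcard, ← divDiffFinset_sub,
    divDiffFinset_insert_of_eq_zero (fun x => f x - f c) hc (sub_self _), slope_fun_def_field]

lemma divDiffFinset_const_mul (c : ℝ) (s : Finset ℝ) :
    divDiffFinset (fun x => c * f x) s = c * divDiffFinset f s := by
  simp only [divDiffFinset, mul_div_assoc, mul_sum]

lemma divDiffFinset_image_add_right (s : Finset ℝ) (ε : ℝ) :
    divDiffFinset f (s.image (· + ε)) = divDiffFinset (fun x => f (x + ε)) s := by
  have hinj : Function.Injective (· + ε) := add_left_injective ε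
  rw [divDiffFinset, sum_image hinj.injOn]
  refine sum_congr rfl fun x _ => ?_
  rw [← image_erase hinj, prod_image hinj.injOn]
  simp only [add_sub_add_right_eq_sub]

end divDiffFinset

lemma image_univ_comp_castSucc {k : ℕ} {x : Fin (k + 2) → ℝ} (hx : Function.Injective x) :
    univ.image (fun i : Fin (k + 1) => x i.castSucc) = (univ.image x).erase (x (Fin.last _)) := by
  change univ.image (x ∘ Fin.castSucc) = _
  rw [image_comp, Fin.image_castSucc, compl_singleton, image_erase hx]

lemma image_univ_comp_succ {k : ℕ} {x : Fin (k + 2) → ℝ} (hx : Function.Injective x) :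
    univ.image (fun i : Fin (k + 1) => x i.succ) = (univ.image x).erase (x 0) := by
  change univ.image (x ∘ Fin.succ) = _
  rw [image_comp, Fin.image_succ_univ, compl_singleton, image_erase hx]

theorem divDiff_eq_divDiffFinset (f : ℝ → ℝ) {k : ℕ} {x : Fin (k + 1) → ℝ}
    (hx : Function.Injective x) : divDiff f k x = divDiffFinset f (univ.image x) := by
  induction k with
  | zero => simp [divDiff, univ_unique]
  | succ k ih =>
    rw [divDiff, ih (x := fun i => x i.castSucc) (hx.comp (Fin.castSucc_injective _)),
      ih (x := fun i => x i.succ) (hx.comp (Fin.succ_injective _)),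
      image_univ_comp_castSucc hx, image_univ_comp_succ hx,
      divDiffFinset_eq_div_sub f (mem_image_of_mem x (mem_univ 0))
        (mem_image_of_mem x (mem_univ _)) (hx.ne (Fin.last_pos.ne))]

lemma MonotoneOn.exists_tendsto_nhdsLT_nhdsGT {φ : ℝ → ℝ} {u v x : ℝ} (hux : u < x) (hxv : x < v)
    (hφ : MonotoneOn φ (Set.Ioo u v \ {x})) :
    ∃ l r, l ≤ r ∧ Tendsto φ (𝓝[<] x) (𝓝 l) ∧ Tendsto φ (𝓝[>] x) (𝓝 r) := by
  have hleft : MonotoneOn φ (Set.Ioo u x) :=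
    hφ.mono fun t ht => ⟨⟨ht.1, ht.2.trans hxv⟩, ht.2.ne⟩
  have hright : MonotoneOn φ (Set.Ioo x v) :=
    hφ.mono fun t ht => ⟨⟨hux.trans ht.1, ht.2⟩, ht.1.ne'⟩
  have across : ∀ t ∈ Set.Ioo u x, ∀ t' ∈ Set.Ioo x v, φ t ≤ φ t' := fun t ht t' ht' =>
    hφ ⟨⟨ht.1, ht.2.trans hxv⟩, ht.2.ne⟩ ⟨⟨hux.trans ht'.1, ht'.2⟩, ht'.1.ne'⟩
      (ht.2.trans ht'.1).le
  obtain ⟨t₀, ht₀⟩ := Set.nonempty_Ioo.mpr hux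
  obtain ⟨t₁, ht₁⟩ := Set.nonempty_Ioo.mpr hxv
  refine ⟨_, _, csSup_le (Set.Nonempty.image φ ⟨t₀, ht₀⟩) ?_,
    hleft.tendsto_nhdsWithin_Ioo_left ⟨t₀, ht₀⟩ ⟨φ t₁, ?_⟩,
    hright.tendsto_nhdsWithin_Ioo_right ⟨t₁, ht₁⟩ ⟨φ t₀, ?_⟩⟩
  · exact Set.forall_mem_image.mpr fun t ht =>
      le_csInf (Set.Nonempty.image φ ⟨t₁, ht₁⟩)
        (Set.forall_mem_image.mpr fun t' ht' => across t ht t' ht')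
  · exact Set.forall_mem_image.mpr fun t ht => across t ht t₁ ht₁
  · exact Set.forall_mem_image.mpr fun t' ht' => across t₀ ht₀ t' ht'

lemma tendsto_of_tendsto_slope {f : ℝ → ℝ} {c x l : ℝ} {F : Filter ℝ} (hF : F ≤ 𝓝 x)
    (hl : Tendsto (slope f c) F (𝓝 l)) : Tendsto f F (𝓝 ((x - c) * l + f c)) := by
  have h := (((tendsto_id.mono_left hF).sub_const c).mul hl).add_const (f c)
  refine h.congr fun t => ?_
  simpa using sub_smul_slope_vadd f c t

def KToneOn (k : ℕ) (f : ℝ → ℝ) (U : Set ℝ) : Prop :=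
  ∀ s : Finset ℝ, s.card = k + 1 → ↑s ⊆ U → 0 ≤ divDiffFinset f s

namespace KToneOn

variable {k : ℕ} {f g : ℝ → ℝ} {U V : Set ℝ}

lemma mono (hf : KToneOn k f U) (hVU : V ⊆ U) : KToneOn k f V :=
  fun s hs hsV => hf s hs (hsV.trans hVU)

lemma congr (hf : KToneOn k f U) (hfg : Set.EqOn f g U) : KToneOn k g U := by
  intro s hs hsU
  convert hf s hs hsU using 1
  exact sum_congr rfl fun x hx => by rw [hfg (hsU hx)]

lemma slope (hf : KToneOn (k + 1) f U) {c : ℝ} (hc : c ∈ U) :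
    KToneOn k (slope f c) (U \ {c}) := by
  intro s hs hsU
  have hcs : c ∉ s := fun h => (hsU h).2 rfl
  rw [divDiffFinset_slope f hcs (card_pos.mp (by omega))]
  refine hf _ (by rw [card_insert_of_notMem hcs, hs]) ?_
  rw [coe_insert]
  exact Set.insert_subset hc (hsU.trans Set.sdiff_subset)

lemma monotoneOn (hf : KToneOn 1 f U) : MonotoneOn f U := by
  intro x hx y hy hxy
  rcases hxy.eq_or_lt with rfl | hlt
  · rfl
  have h := hf {x, y} (card_pair hlt.ne) (by simp [Set.insert_subset_iff, hx, hy])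
  rwa [divDiffFinset_pair f hlt.ne, slope_nonneg_iff_of_le hxy] at h

lemma monotoneOn_slope (hf : KToneOn 2 f U) {c : ℝ} (hc : c ∈ U) :
    MonotoneOn (_root_.slope f c) (U \ {c}) :=
  (hf.slope hc).monotoneOn

lemma convexOn (hf : KToneOn 2 f U) (hU : Convex ℝ U) : ConvexOn ℝ U f := by
  refine convexOn_of_slope_mono_adjacent hU fun {x y z} hx hz hxy hyz => ?_
  have hy : y ∈ U := hU.ordConnected.out hx hz ⟨hxy.le, hyz.le⟩
  have h := hf.monotoneOn_slope hy ⟨hx, hxy.ne⟩ ⟨hz, hyz.ne'⟩ (hxy.trans hyz).le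
  rwa [slope_comm, slope_def_field, slope_def_field] at h

lemma continuousOn (hf : KToneOn 2 f U) (hU : IsOpen U) : ContinuousOn f U := by
  intro x hx
  obtain ⟨ε, hε, hball⟩ := Metric.isOpen_iff.mp hU x hx
  rw [Real.ball_eq_Ioo] at hball
  exact (((hf.mono hball).convexOn (convex_Ioo _ _)).continuousOn isOpen_Ioo).continuousAt
    (Ioo_mem_nhds (by linarith) (by linarith)) |>.continuousWithinAt

lemma divDiffFinset_insert_le_insert (hf : KToneOn (k + 1) f U) {s : Finset ℝ} (hs : s.card = k)
    (hsU : ↑s ⊆ U) {u w : ℝ} (hu : u ∈ U) (hw : w ∈ U) (huw : u < w) (hus : u ∉ s) (hws : w ∉ s) :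
    divDiffFinset f (insert u s) ≤ divDiffFinset f (insert w s) := by
  have hwus : w ∉ insert u s := by simp [huw.ne', hws]
  have h := hf (insert w (insert u s)) (by rw [card_insert_of_notMem hwus,
    card_insert_of_notMem hus, hs]) (by simp [Set.insert_subset_iff, hu, hw, hsU])
  rw [divDiffFinset_eq_div_sub f (mem_insert_self w _) (mem_insert_of_mem (mem_insert_self u s))
    huw.ne', erase_insert hwus, erase_insert_of_ne huw.ne', erase_insert hus] at h
  simpa using (le_div_iff₀ (sub_pos.mpr huw)).mp h

lemma divDiffFinset_insert_le_insert_add (hf : KToneOn (k + 1) f U) {ε : ℝ} (hε : 0 < ε)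
    {r t : Finset ℝ} {m : ℝ} (hr : ∀ x ∈ r, x < m) (ht : ∀ y ∈ t, m + ε < y)
    (hcard : r.card + t.card = k) (hrU : ↑r ⊆ U) (htU : ↑t ⊆ U) (hm : m ∈ U) (hmε : m + ε ∈ U) :
    divDiffFinset f (insert m (r ∪ t)) ≤ divDiffFinset f (insert (m + ε) (r ∪ t)) := by
  have hrt : Disjoint r t := disjoint_left.mpr fun x hx hxt => by
    linarith [hr x hx, ht x hxt]
  refine hf.divDiffFinset_insert_le_insert (by rw [card_union_of_disjoint hrt, hcard])
    (by rw [coe_union]; exact Set.union_subset hrU htU) hm hmε (by linarith) ?_ ?_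
  · rw [mem_union, not_or]
    exact ⟨fun h => (hr m h).false, fun h => by linarith [ht m h]⟩
  · rw [mem_union, not_or]
    exact ⟨fun h => by linarith [hr _ h], fun h => (ht _ h).false⟩

-- `r` holds the nodes below `s`, which stay put; the nodes of `s` are shifted one at a time,
-- the largest first, so that no two nodes ever collide.
lemma divDiffFinset_union_le_image_add (hf : KToneOn (k + 1) f U) {ε : ℝ} (hε : 0 < ε)
    (s : Finset ℝ) {r : Finset ℝ} (hrs : ∀ x ∈ r, ∀ y ∈ s, x < y) (hcard : r.card + s.card = k + 1)
    (hrU : ↑r ⊆ U) (hsU : ↑s ⊆ U) (hsεU : ↑(s.image (· + ε)) ⊆ U) :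
    divDiffFinset f (r ∪ s) ≤ divDiffFinset f (r ∪ s.image (· + ε)) := by
  induction s using induction_on_min generalizing r with
  | empty => simp
  | insert m s hms ih =>
    have hms' : m ∉ s := fun h => (hms m h).false
    rw [card_insert_of_notMem hms'] at hcard
    rw [coe_insert, Set.insert_subset_iff] at hsU
    rw [image_insert, coe_insert, Set.insert_subset_iff] at hsεU
    calc divDiffFinset f (r ∪ insert m s)
        = divDiffFinset f (insert m r ∪ s) := by rw [union_insert, insert_union]
      _ ≤ divDiffFinset f (insert m (r ∪ s.image (· + ε))) := by
          rw [← insert_union]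
          refine ih (fun x hx y hy => ?_) ?_ ?_ hsU.2 hsεU.2
          · rcases mem_insert.mp hx with rfl | hx
            · exact hms y hy
            · exact hrs x hx y (mem_insert_of_mem hy)
          · rw [card_insert_of_notMem fun h => (hrs m h m (mem_insert_self m s)).false]
            omega
          · rw [coe_insert]
            exact Set.insert_subset hsU.1 hrU
      _ ≤ divDiffFinset f (insert (m + ε) (r ∪ s.image (· + ε))) := by
          refine hf.divDiffFinset_insert_le_insert_add hε
            (fun x hx => hrs x hx m (mem_insert_self m s)) (fun y hy => ?_) ?_ hrU hsεU.2
            hsU.1 hsεU.1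
          · obtain ⟨z, hz, rfl⟩ := mem_image.mp hy
            linarith [hms z hz]
          · rw [card_image_of_injective _ (add_left_injective ε)]
            omega
      _ = divDiffFinset f (r ∪ (insert m s).image (· + ε)) := by
          rw [image_insert, union_insert]

lemma divDiffFinset_le_image_add (hf : KToneOn (k + 1) f U) {ε : ℝ} (hε : 0 < ε)
    {s : Finset ℝ} (hs : s.card = k + 1) (hsU : ↑s ⊆ U) (hsεU : ↑(s.image (· + ε)) ⊆ U) :
    divDiffFinset f s ≤ divDiffFinset f (s.image (· + ε)) := by
  simpa using hf.divDiffFinset_union_le_image_add hε s (r := ∅) (by simp) (by simpa using hs)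
    (by simp) hsU hsεU

lemma deriv (hf : KToneOn (k + 1) f U) (hU : IsOpen U)
    (hd : ∀ x ∈ U, DifferentiableAt ℝ f x) : KToneOn k (deriv f) U := by
  intro s hs hsU
  have hlim : Tendsto (fun ε => divDiffFinset (fun x => ε⁻¹ * (f (x + ε) - f x)) s)
      (𝓝[>] 0) (𝓝 (divDiffFinset (_root_.deriv f) s)) :=
    tendsto_finsetSum _ fun x hx =>
      ((hd x (hsU hx)).hasDerivAt.tendsto_slope_zero_right).div_const _
  have hshift : ∀ᶠ ε in 𝓝[>] (0 : ℝ), ↑(s.image (· + ε)) ⊆ U := by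
    have : ∀ᶠ ε in 𝓝 (0 : ℝ), ∀ x ∈ s, x + ε ∈ U := (eventually_all_finset s).mpr fun x hx =>
      (continuous_const_add x).tendsto' 0 x (add_zero x) |>.eventually (hU.mem_nhds (hsU hx))
    filter_upwards [nhdsWithin_le_nhds this] with ε hε
    rw [coe_image]
    exact Set.image_subset_iff.mpr hε
  refine ge_of_tendsto hlim ?_
  filter_upwards [self_mem_nhdsWithin, hshift] with ε hε hsεU
  rw [divDiffFinset_const_mul, divDiffFinset_sub, ← divDiffFinset_image_add_right]
  exact mul_nonneg (inv_nonneg.mpr (le_of_lt hε))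
    (sub_nonneg.mpr (hf.divDiffFinset_le_image_add hε hs hsU hsεU))

/-- The jump of `f` at `x` is `(x - c)` times the jump of the monotone function `slope f c`, so it
is nonnegative for `c < x` and nonpositive for `c > x`. -/
lemma exists_tendsto_nhdsNE_of_two {p q x : ℝ} (hf : KToneOn 2 f (Set.Ioo p q \ {x}))
    (hpx : p < x) (hxq : x < q) : ∃ L, Tendsto f (𝓝[≠] x) (𝓝 L) := by
  obtain ⟨c₁, hpc₁, hc₁x⟩ := exists_between hpx
  obtain ⟨c₂, hxc₂, hc₂q⟩ := exists_between hxq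
  have mono₁ : MonotoneOn (_root_.slope f c₁) (Set.Ioo c₁ q \ {x}) :=
    (hf.monotoneOn_slope ⟨⟨hpc₁, hc₁x.trans hxq⟩, hc₁x.ne⟩).mono
      fun t ht => ⟨⟨⟨hpc₁.trans ht.1.1, ht.1.2⟩, ht.2⟩, ht.1.1.ne'⟩
  have mono₂ : MonotoneOn (_root_.slope f c₂) (Set.Ioo p c₂ \ {x}) :=
    (hf.monotoneOn_slope ⟨⟨hpx.trans hxc₂, hc₂q⟩, hxc₂.ne'⟩).mono
      fun t ht => ⟨⟨⟨ht.1.1, ht.1.2.trans hc₂q⟩, ht.2⟩, ht.1.2.ne⟩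
  obtain ⟨l₁, r₁, hlr₁, hl₁, hr₁⟩ := mono₁.exists_tendsto_nhdsLT_nhdsGT hc₁x hxq
  obtain ⟨l₂, r₂, hlr₂, hl₂, hr₂⟩ := mono₂.exists_tendsto_nhdsLT_nhdsGT hpx hxc₂
  have hleft := tendsto_of_tendsto_slope nhdsWithin_le_nhds hl₁
  have hright := tendsto_of_tendsto_slope nhdsWithin_le_nhds hr₁
  have hleft_eq := tendsto_nhds_unique hleft (tendsto_of_tendsto_slope nhdsWithin_le_nhds hl₂)
  have hright_eq := tendsto_nhds_unique hright (tendsto_of_tendsto_slope nhdsWithin_le_nhds hr₂)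
  have hjump : (x - c₁) * r₁ + f c₁ = (x - c₁) * l₁ + f c₁ := by
    linarith [mul_le_mul_of_nonneg_left hlr₁ (sub_nonneg.mpr hc₁x.le),
      mul_le_mul_of_nonpos_left hlr₂ (sub_nonpos.mpr hxc₂.le)]
  rw [← nhdsLT_sup_nhdsGT]
  exact ⟨_, hleft.sup (hjump ▸ hright)⟩

lemma exists_tendsto_nhdsNE (hk : 2 ≤ k) {p q x : ℝ} (hf : KToneOn k f (Set.Ioo p q \ {x}))
    (hpx : p < x) (hxq : x < q) : ∃ L, Tendsto f (𝓝[≠] x) (𝓝 L) := by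
  induction k, hk using Nat.le_induction generalizing f q with
  | base => exact hf.exists_tendsto_nhdsNE_of_two hpx hxq
  | succ k hk ih =>
    obtain ⟨c, hxc, hcq⟩ := exists_between hxq
    have hc : c ∈ Set.Ioo p q \ {x} := ⟨⟨hpx.trans hxc, hcq⟩, hxc.ne'⟩
    obtain ⟨L, hL⟩ := ih ((hf.slope hc).mono fun t ht =>
      ⟨⟨⟨ht.1.1, ht.1.2.trans hcq⟩, ht.2⟩, ht.1.2.ne⟩) hxc
    exact ⟨_, tendsto_of_tendsto_slope nhdsWithin_le_nhds hL⟩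

lemma differentiableAt (hk : 2 ≤ k) (hf : KToneOn (k + 1) f U) (hU : IsOpen U) {x : ℝ}
    (hx : x ∈ U) : DifferentiableAt ℝ f x := by
  obtain ⟨ε, hε, hball⟩ := Metric.isOpen_iff.mp hU x hx
  rw [Real.ball_eq_Ioo] at hball
  have hslope := (hf.mono hball).slope (c := x) ⟨by linarith, by linarith⟩
  obtain ⟨L, hL⟩ := hslope.exists_tendsto_nhdsNE hk (by linarith) (by linarith)
  exact (hasDerivAt_iff_tendsto_slope.mpr hL).differentiableAt

theorem contDiffOn_and_kToneOn_iteratedDerivWithin {j : ℕ} (hf : KToneOn (j + 2) f U)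
    (hU : IsOpen U) :
    ContDiffOn ℝ j f U ∧ KToneOn 2 (iteratedDerivWithin j f U) U := by
  induction j generalizing f with
  | zero => exact ⟨contDiffOn_zero.mpr (hf.continuousOn hU), by simpa using hf⟩
  | succ j ih =>
    have hd : ∀ x ∈ U, DifferentiableAt ℝ f x := fun x hx =>
      differentiableAt (k := j + 2) (by omega) hf hU hx
    have hderiv : Set.EqOn (derivWithin f U) (_root_.deriv f) U := fun x hx =>
      derivWithin_of_isOpen hU hx
    obtain ⟨hcont, htone⟩ := ih (KToneOn.deriv (k := j + 2) hf hU hd)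
    refine ⟨?_, htone.congr fun x hx => ?_⟩
    · rw [Nat.cast_succ, contDiffOn_succ_iff_derivWithin hU.uniqueDiffOn]
      exact ⟨fun x hx => (hd x hx).differentiableWithinAt, by simp, hcont.congr hderiv⟩
    · rw [iteratedDerivWithin_succ']
      exact (iteratedDerivWithin_congr hderiv hx).symm

end KToneOn

theorem ktone_contDiff_and_convex_general (f : ℝ → ℝ) (a b : ℝ) (k : ℕ) (hk : 2 ≤ k)
    (htone : ∀ x : Fin (k + 1) → ℝ, Function.Injective x →
      (∀ i, x i ∈ Set.Ioo a b) → 0 ≤ divDiff f k x) :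
    ContDiffOn ℝ (k - 2 : ℕ) f (Set.Ioo a b) ∧
    ConvexOn ℝ (Set.Ioo a b) (iteratedDerivWithin (k - 2) f (Set.Ioo a b)) := by
  have hK : KToneOn k f (Set.Ioo a b) := fun s hs hsU => by
    have hx := (s.orderEmbOfFin hs).injective
    have h := htone _ hx fun i => hsU (s.orderEmbOfFin_mem hs i)
    rwa [divDiff_eq_divDiffFinset f hx, image_orderEmbOfFin_univ] at h
  obtain ⟨j, rfl⟩ := Nat.exists_eq_add_of_le' hk
  obtain ⟨hcont, htwo⟩ := hK.contDiffOn_and_kToneOn_iteratedDerivWithin isOpen_Ioo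
  rw [Nat.add_sub_cancel]
  exact ⟨hcont, htwo.convexOn (convex_Ioo a b)⟩

theorem ktone_contDiff_and_convex (f : ℝ → ℝ) (a b : ℝ) (hab : a < b) (k : ℕ) (hk : 2 ≤ k)
    (htone : ∀ x : Fin (k + 1) → ℝ, Function.Injective x →
      (∀ i, x i ∈ Set.Ioo a b) → 0 ≤ divDiff f k x) :
    ContDiffOn ℝ (k - 2 : ℕ) f (Set.Ioo a b) ∧
    ConvexOn ℝ (Set.Ioo a b) (iteratedDerivWithin (k - 2) f (Set.Ioo a b)) :=
  ktone_contDiff_and_convex_general f a b k hk htone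
end

section
/- A C^k real function f on an open interval (a,b) is k-tone (all k-th divided differences at pairwise distinct points of (a,b) are nonnegative) if and only if f^{(k)}(x) ≥ 0 for all x ∈ (a,b). -/
open Polynomial Set Function Lagrange Nat

/-!
For pairwise distinct nodes `x`, `divDiff f k x` is the coefficient of `X ^ k` in the Lagrange
interpolant `p` of `f` at the nodes (the defining recursion is Neville's), so it does not depend
on the order of the nodes. As `f - p` vanishes at the `k + 1` nodes, applying Rolle's theorem `k`
times gives a point `ξ` between them with `f⁽ᵏ⁾ ξ = p⁽ᵏ⁾ ξ = k! * divDiff f k x`. This gives one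
direction; conversely, if `f⁽ᵏ⁾ x₀ < 0` then `f⁽ᵏ⁾ < 0` on an interval around `x₀`, and any
`k + 1` nodes in that interval have a negative divided difference.
-/

theorem Fin.image_comp_succAbove_univ {α : Type*} [DecidableEq α] {n : ℕ} {x : Fin (n + 1) → α}
    (hx : Injective x) (i : Fin (n + 1)) :
    Finset.univ.image (x ∘ i.succAbove) = (Finset.univ.image x).erase (x i) := by
  rw [← Finset.image_image, Fin.image_succAbove_univ, Finset.compl_singleton,
    Finset.image_erase hx]

namespace Lagrange

theorem coeff_mul_basisDivisor_succ {F : Type*} [Field F] {p : F[X]} {n : ℕ}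
    (hp : p.coeff (n + 1) = 0) (a b : F) :
    (p * basisDivisor a b).coeff (n + 1) = (a - b)⁻¹ * p.coeff n := by
  rw [basisDivisor, mul_left_comm, coeff_C_mul, coeff_mul_X_sub_C, hp, zero_mul, sub_zero]

theorem natDegree_interpolate_image_le {F : Type*} [Field F] [DecidableEq F] {n : ℕ}
    {x : Fin (n + 1) → F} (hx : Injective x) (r : F → F) :
    (interpolate (Finset.univ.image x) id r).natDegree ≤ n := by
  have := degree_interpolate_lt r (injOn_id (Finset.univ.image x : Set F))
  rw [Finset.card_image_of_injective _ hx, Finset.card_univ, Fintype.card_fin] at this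
  exact natDegree_le_of_degree_le (Order.le_of_lt_succ this)

end Lagrange

namespace Polynomial

theorem iteratedDeriv_eval {𝕜 : Type*} [NontriviallyNormedField 𝕜] (p : 𝕜[X]) (n : ℕ) (x : 𝕜) :
    iteratedDeriv n (fun x => p.eval x) x = (derivative^[n] p).eval x := by
  induction n generalizing p with
  | zero => rfl
  | succ n ih =>
    have hderiv : _root_.deriv (fun x => p.eval x) = fun x => (derivative p).eval x := by
      ext; exact Polynomial.deriv p
    rw [iteratedDeriv_succ', hderiv, ih, Function.iterate_succ_apply]

theorem iterate_derivative_of_natDegree_le {R : Type*} [Semiring R] {p : R[X]} {n : ℕ}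
    (hp : p.natDegree ≤ n) : derivative^[n] p = C (n ! * p.coeff n) := by
  rw [eq_C_of_natDegree_le_zero ((natDegree_iterate_derivative p n).trans (by omega)),
    coeff_iterate_derivative, zero_add, descFactorial_self, nsmul_eq_mul]

end Polynomial

theorem divDiff_eq_coeff_interpolate (f : ℝ → ℝ) {k : ℕ} {x : Fin (k + 1) → ℝ}
    (hx : Injective x) : divDiff f k x = (interpolate (Finset.univ.image x) id f).coeff k := by
  induction k with
  | zero => simp [divDiff, Finset.univ_unique]
  | succ k ih =>
    have hx0 := Finset.mem_image_of_mem x (Finset.mem_univ 0)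
    have hxl := Finset.mem_image_of_mem x (Finset.mem_univ (Fin.last (k + 1)))
    have hne : x 0 ≠ x (Fin.last (k + 1)) := hx.ne (Fin.last_pos).ne
    rw [interpolate_eq_add_interpolate_erase f (injOn_id _) hx0 hxl hne, coeff_add,
      ← Fin.image_comp_succAbove_univ hx, ← Fin.image_comp_succAbove_univ hx, Fin.succAbove_last,
      Fin.succAbove_zero]
    have hxA : Injective (x ∘ Fin.castSucc) := hx.comp (Fin.castSucc_injective _)
    have hxB : Injective (x ∘ Fin.succ) := hx.comp (Fin.succ_injective _)
    have hcoeff {y : Fin (k + 1) → ℝ} (hy : Injective y) :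
        (interpolate (Finset.univ.image y) id f).coeff (k + 1) = 0 :=
      coeff_eq_zero_of_natDegree_lt ((natDegree_interpolate_image_le hy f).trans_lt k.lt_succ_self)
    rw [coeff_mul_basisDivisor_succ (hcoeff hxA), coeff_mul_basisDivisor_succ (hcoeff hxB),
      ← ih hxA, ← ih hxB, divDiff, id, id, ← neg_sub (x 0), inv_neg, comp_def, comp_def]
    ring

theorem divDiff_comp_perm (f : ℝ → ℝ) {k : ℕ} {x : Fin (k + 1) → ℝ} (hx : Injective x)
    (σ : Equiv.Perm (Fin (k + 1))) : divDiff f k (x ∘ σ) = divDiff f k x := by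
  rw [divDiff_eq_coeff_interpolate f hx, divDiff_eq_coeff_interpolate f (hx.comp σ.injective),
    ← Finset.image_image, Finset.image_univ_equiv]

theorem exists_iteratedDeriv_eq_zero_of_strictMono {s : Set ℝ} (hs : IsOpen s) {n : ℕ}
    {g : ℝ → ℝ} (hg : ContDiffOn ℝ (n : ℕ∞) g s) {y : Fin (n + 1) → ℝ} (hy : StrictMono y)
    (hys : Icc (y 0) (y (Fin.last n)) ⊆ s) (hgy : ∀ i, g (y i) = 0) :
    ∃ ξ ∈ Icc (y 0) (y (Fin.last n)), iteratedDeriv n g ξ = 0 := by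
  induction n generalizing g with
  | zero => exact ⟨y 0, left_mem_Icc.2 le_rfl, hgy 0⟩
  | succ n ih =>
    have hIcc (i : Fin (n + 1)) : Icc (y i.castSucc) (y i.succ) ⊆ Icc (y 0) (y (Fin.last _)) :=
      Icc_subset_Icc (hy.monotone (Fin.zero_le _)) (hy.monotone (Fin.le_last _))
    have hrolle (i : Fin (n + 1)) : ∃ z ∈ Ioo (y i.castSucc) (y i.succ), deriv g z = 0 :=
      exists_deriv_eq_zero (hy Fin.castSucc_lt_succ) (hg.continuousOn.mono ((hIcc i).trans hys))
        ((hgy _).trans (hgy _).symm)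
    choose z hz hgz using hrolle
    have hz_mono : StrictMono z := fun i j hij =>
      (hz i).2.trans ((hy.monotone (Fin.succ_le_castSucc_iff.2 hij)).trans_lt (hz j).1)
    have hzy : Icc (z 0) (z (Fin.last n)) ⊆ Icc (y 0) (y (Fin.last (n + 1))) :=
      Icc_subset_Icc (hz 0).1.le (hz _).2.le
    obtain ⟨ξ, hξ, hξ0⟩ := ih (hg.deriv_of_isOpen hs (by norm_cast)) hz_mono (hzy.trans hys) hgz
    exact ⟨ξ, hzy hξ, by rwa [iteratedDeriv_succ']⟩

theorem exists_factorial_mul_divDiff_eq_iteratedDerivWithin {f : ℝ → ℝ} {s : Set ℝ}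
    (hs : IsOpen s) {k : ℕ} (hf : ContDiffOn ℝ (k : ℕ∞) f s) {x : Fin (k + 1) → ℝ}
    (hx : StrictMono x) (hxs : Icc (x 0) (x (Fin.last k)) ⊆ s) :
    ∃ ξ ∈ Icc (x 0) (x (Fin.last k)), k ! * divDiff f k x = iteratedDerivWithin k f s ξ := by
  set p := interpolate (Finset.univ.image x) id f
  have hp : ContDiff ℝ (k : ℕ∞) fun t => p.eval t := by
    simpa using p.contDiff_aeval (R := ℝ) (𝕜 := ℝ) k
  have hpx (i : Fin (k + 1)) : f (x i) - p.eval (x i) = 0 :=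
    sub_eq_zero.2 (eval_interpolate_at_node f (injOn_id _)
      (Finset.mem_image_of_mem x (Finset.mem_univ i))).symm
  obtain ⟨ξ, hξ, hξ0⟩ :=
    exists_iteratedDeriv_eq_zero_of_strictMono hs (hf.sub hp.contDiffOn) hx hxs hpx
  have hξs : s ∈ nhds ξ := hs.mem_nhds (hxs hξ)
  rw [iteratedDeriv_fun_sub (hf.contDiffAt hξs) hp.contDiffAt, sub_eq_zero, iteratedDeriv_eval,
    iterate_derivative_of_natDegree_le (natDegree_interpolate_image_le hx.injective f), eval_C,
    ← divDiff_eq_coeff_interpolate f hx.injective] at hξ0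
  exact ⟨ξ, hξ, by rw [iteratedDerivWithin_of_isOpen hs (hxs hξ), hξ0]⟩

theorem iteratedDerivWithin_nonneg_of_divDiff_nonneg {f : ℝ → ℝ} {s : Set ℝ} (hs : IsOpen s)
    {k : ℕ} (hf : ContDiffOn ℝ (k : ℕ∞) f s)
    (hdiv : ∀ x : Fin (k + 1) → ℝ, Injective x → (∀ i, x i ∈ s) → 0 ≤ divDiff f k x)
    {x₀ : ℝ} (hx₀ : x₀ ∈ s) : 0 ≤ iteratedDerivWithin k f s x₀ := by
  by_contra! hneg
  have hcont := (hf.continuousOn_iteratedDerivWithin le_rfl hs.uniqueDiffOn).continuousAt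
    (hs.mem_nhds hx₀)
  obtain ⟨l, u, hx₀lu, hlu⟩ := mem_nhds_iff_exists_Ioo_subset.1
    (Filter.inter_mem (hs.mem_nhds hx₀) (hcont.eventually_lt_const hneg))
  obtain ⟨t, htlu, htcard⟩ := (Ioo_infinite (hx₀lu.1.trans hx₀lu.2)).exists_subset_card_eq (k + 1)
  set y := t.orderEmbOfFin htcard
  have hy (i : Fin (k + 1)) : y i ∈ Ioo l u := htlu (t.orderEmbOfFin_mem htcard i)
  have hyIcc : Icc (y 0) (y (Fin.last k)) ⊆ Ioo l u := Icc_subset_Ioo (hy 0).1 (hy _).2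
  obtain ⟨ξ, hξ, heq⟩ := exists_factorial_mul_divDiff_eq_iteratedDerivWithin hs hf y.strictMono
    fun _ h => (hlu (hyIcc h)).1
  have hξneg : iteratedDerivWithin k f s ξ < 0 := (hlu (hyIcc hξ)).2
  exact hξneg.not_ge
    (heq ▸ mul_nonneg k.factorial.cast_nonneg (hdiv y y.injective fun i => (hlu (hy i)).1))

theorem divDiff_nonneg_of_iteratedDerivWithin_nonneg {f : ℝ → ℝ} {s : Set ℝ} (hs : IsOpen s)
    (hs' : s.OrdConnected) {k : ℕ} (hf : ContDiffOn ℝ (k : ℕ∞) f s)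
    (hderiv : ∀ x ∈ s, 0 ≤ iteratedDerivWithin k f s x) {x : Fin (k + 1) → ℝ}
    (hx : Injective x) (hxs : ∀ i, x i ∈ s) : 0 ≤ divDiff f k x := by
  set σ := Tuple.sort x
  have hxσ : StrictMono (x ∘ σ) :=
    (Tuple.monotone_sort x).strictMono_of_injective (hx.comp σ.injective)
  obtain ⟨ξ, hξ, heq⟩ :=
    exists_factorial_mul_divDiff_eq_iteratedDerivWithin hs hf hxσ (hs'.out (hxs _) (hxs _))
  rw [← divDiff_comp_perm f hx σ]
  exact nonneg_of_mul_nonneg_right (heq ▸ hderiv ξ (hs'.out (hxs _) (hxs _) hξ)) (by positivity)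

theorem ktone_iff_iteratedDeriv_nonneg_general (f : ℝ → ℝ) (a b : ℝ) (k : ℕ)
    (hf : ContDiffOn ℝ (k : ℕ∞) f (Set.Ioo a b)) :
    (∀ x : Fin (k + 1) → ℝ, Function.Injective x →
      (∀ i, x i ∈ Set.Ioo a b) → 0 ≤ divDiff f k x) ↔
    ∀ x ∈ Set.Ioo a b, 0 ≤ iteratedDerivWithin k f (Set.Ioo a b) x :=
  ⟨fun h _ hx => iteratedDerivWithin_nonneg_of_divDiff_nonneg isOpen_Ioo hf h hx,
    fun h _ hx hxs => divDiff_nonneg_of_iteratedDerivWithin_nonneg isOpen_Ioo ordConnected_Ioo hf h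
      hx hxs⟩

theorem ktone_iff_iteratedDeriv_nonneg (f : ℝ → ℝ) (a b : ℝ) (hab : a < b) (k : ℕ)
    (hf : ContDiffOn ℝ (k : ℕ∞) f (Set.Ioo a b)) :
    (∀ x : Fin (k + 1) → ℝ, Function.Injective x →
      (∀ i, x i ∈ Set.Ioo a b) → 0 ≤ divDiff f k x) ↔
    ∀ x ∈ Set.Ioo a b, 0 ≤ iteratedDerivWithin k f (Set.Ioo a b) x :=
  ktone_iff_iteratedDeriv_nonneg_general f a b k hf
end

section
/- If f is a k-tone function on (a,b) (k ≥ 1), then for any pairwise distinct points x_1 < y_1, …, x_{k} < y_{k}, x_{k+1} < y_{k+1} (meaning x_i < y_i for each i, with x_1,…,x_{k+1} pairwise distinct and y_1,…,y_{k+1} pairwise distinct, all in (a,b)), one has f^[k](x_1,…,x_{k+1}) ≤ f^[k](y_1,…,y_{k+1}). (Monotonicity of the k-th divided difference of a (k+1)-tone function in each variable.) -/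
open Finset Function Polynomial Lagrange

section Field

variable {K : Type*} [Field K]

theorem Polynomial.coeff_mul_basisDivisor_of_degree_lt {P : K[X]} {n : ℕ}
    (hP : P.degree < ↑(n + 1)) (x y : K) :
    (P * basisDivisor x y).coeff (n + 1) = (x - y)⁻¹ * P.coeff n := by
  rw [basisDivisor, mul_left_comm, coeff_C_mul, coeff_mul_X_sub_C, coeff_eq_zero_of_degree_lt hP,
    zero_mul, sub_zero]

variable [DecidableEq K]

noncomputable def divDiffOn (f : K → K) (s : Finset K) : K :=
  (interpolate s id f).coeff (#s - 1)

theorem divDiffOn_singleton (f : K → K) (x : K) : divDiffOn f {x} = f x := by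
  simp [divDiffOn]

theorem divDiffOn_eq_sub_div (f : K → K) {s : Finset K} {x y : K} (hx : x ∈ s) (hy : y ∈ s)
    (hxy : x ≠ y) :
    divDiffOn f s = (divDiffOn f (s.erase y) - divDiffOn f (s.erase x)) / (x - y) := by
  obtain ⟨n, hn⟩ : ∃ n, #s = n + 2 :=
    ⟨#s - 2, by have := one_lt_card.2 ⟨x, hx, y, hy, hxy⟩; omega⟩
  have hdeg : ∀ z ∈ s, (interpolate (s.erase z) id f).degree < ↑(n + 1) := fun z hz => by
    have := degree_interpolate_lt f (Set.injOn_id (s.erase z : Set K))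
    rwa [card_erase_of_mem hz, hn] at this
  unfold divDiffOn
  rw [card_erase_of_mem hx, card_erase_of_mem hy, hn]
  change (interpolate s id f).coeff (n + 1) =
    ((interpolate (s.erase y) id f).coeff n - (interpolate (s.erase x) id f).coeff n) / (x - y)
  rw [interpolate_eq_add_interpolate_erase f (Set.injOn_id _) hx hy hxy, coeff_add,
    coeff_mul_basisDivisor_of_degree_lt (hdeg y hy), coeff_mul_basisDivisor_of_degree_lt (hdeg x hx)]
  have hxy' : x - y ≠ 0 := sub_ne_zero.mpr hxy
  simp only [id]
  field_simp
  ring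

theorem divDiffOn_le_insert_erase_of_nonneg [LinearOrder K] [IsStrictOrderedRing K] {f : K → K}
    {s : Finset K} {u c : K} (hs : 0 ≤ divDiffOn f (insert c s)) (hu : u ∈ s) (hc : c ∉ s)
    (huc : u < c) : divDiffOn f s ≤ divDiffOn f (insert c (s.erase u)) := by
  rw [divDiffOn_eq_sub_div f (mem_insert_self c s) (mem_insert_of_mem hu) huc.ne',
    erase_insert hc, erase_insert_of_ne huc.ne'] at hs
  rwa [le_div_iff₀ (sub_pos.mpr huc), zero_mul, sub_nonneg] at hs

end Field

theorem Finset.image_univ_update {ι β : Type*} [Fintype ι] [DecidableEq ι] [DecidableEq β]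
    {x : ι → β} (hx : Injective x) (i : ι) (c : β) :
    univ.image (update x i c) = insert c ((univ.image x).erase (x i)) := by
  rw [← insert_erase (mem_univ i), image_insert, image_insert, update_self,
    erase_insert (by simp [hx.eq_iff])]
  congr 1
  exact image_congr fun j hj => update_of_ne (ne_of_mem_erase hj) c x

theorem divDiff_eq_divDiffOn_image (f : ℝ → ℝ) :
    ∀ {k : ℕ} {x : Fin (k + 1) → ℝ}, Injective x →
      divDiff f k x = divDiffOn f (univ.image x)
  | 0, x, _ => by simp [divDiff, univ_unique, divDiffOn_singleton]
  | k + 1, x, hx => by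
    have hfront : univ.image (x ∘ Fin.castSucc) = (univ.image x).erase (x (Fin.last _)) := by
      rw [← image_image, Fin.image_castSucc, compl_singleton, image_erase hx]
    have hback : univ.image (x ∘ Fin.succ) = (univ.image x).erase (x 0) := by
      rw [← image_image, Fin.image_succ_univ, compl_singleton, image_erase hx]
    change (divDiff f k (x ∘ Fin.castSucc) - divDiff f k (x ∘ Fin.succ)) / _ = _
    rw [divDiff_eq_divDiffOn_image f (hx.comp (Fin.castSucc_injective _)),
      divDiff_eq_divDiffOn_image f (hx.comp (Fin.succ_injective _)),
      divDiffOn_eq_sub_div f (mem_image_of_mem x (mem_univ 0)) (mem_image_of_mem x (mem_univ _))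
        (hx.ne (Fin.last_pos.ne)), hfront, hback]

theorem Finset.image_univ_cons {n : ℕ} {β : Type*} [DecidableEq β] (c : β) (x : Fin n → β) :
    univ.image (Fin.cons c x : Fin (n + 1) → β) = insert c (univ.image x) := by
  ext
  simp [Fin.exists_fin_succ, eq_comm]

theorem Function.Injective.update_of_notMem_range {ι β : Type*} [DecidableEq ι] {x : ι → β}
    (hx : Injective x) (i : ι) {c : β} (hc : c ∉ Set.range x) : Injective (update x i c) := by
  intro p q h
  simp only [update_apply] at h
  split_ifs at h with hp hq hq
  · rw [hp, hq]
  · exact absurd ⟨q, h.symm⟩ hc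
  · exact absurd ⟨p, h⟩ hc
  · exact hx h

def IsTone (n : ℕ) (f : ℝ → ℝ) (s : Set ℝ) : Prop :=
  ∀ z : Fin (n + 1) → ℝ, Injective z → (∀ i, z i ∈ s) → 0 ≤ divDiff f n z

section Tone

variable {f : ℝ → ℝ} {k : ℕ} {s : Set ℝ}

theorem IsTone.divDiff_le_divDiff_update (htone : IsTone (k + 1) f s) {x : Fin (k + 1) → ℝ}
    (hx : Injective x) (hxs : ∀ i, x i ∈ s) {i : Fin (k + 1)} {c : ℝ} (hcs : c ∈ s)
    (hc : c ∉ Set.range x) (hxc : x i < c) : divDiff f k x ≤ divDiff f k (update x i c) := by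
  have hcx : Injective (Fin.cons c x : Fin (k + 2) → ℝ) := Fin.cons_injective_iff.mpr ⟨hc, hx⟩
  have hcx' : Injective (update x i c) := hx.update_of_notMem_range i hc
  have hnonneg := htone _ hcx (Fin.cases hcs hxs)
  rw [divDiff_eq_divDiffOn_image f hcx, image_univ_cons] at hnonneg
  rw [divDiff_eq_divDiffOn_image f hx, divDiff_eq_divDiffOn_image f hcx', image_univ_update hx]
  exact divDiffOn_le_insert_erase_of_nonneg hnonneg (mem_image_of_mem x (mem_univ i))
    (by simpa using hc) hxc

theorem IsTone.divDiff_le_divDiff (htone : IsTone (k + 1) f s) {x y : Fin (k + 1) → ℝ}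
    (hx : Injective x) (hy : Injective y) (hxs : ∀ i, x i ∈ s) (hys : ∀ i, y i ∈ s)
    (hxy : x ≤ y) : divDiff f k x ≤ divDiff f k y := by
  obtain ⟨n, hn⟩ : ∃ n, #{i | x i ≠ y i} = n := ⟨_, rfl⟩
  induction n generalizing x with
  | zero =>
    have hxy : x = y := funext fun i => by
      simpa using filter_eq_empty_iff.mp (card_eq_zero.mp hn) (mem_univ i)
    rw [hxy]
  | succ n ih =>
    obtain ⟨i, hi, hmax⟩ := exists_max_image {i | x i ≠ y i} x (card_pos.mp (by omega))
    have hxi : x i < y i := lt_of_le_of_ne (hxy i) (mem_filter.mp hi).2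
    -- `x i` is the largest coordinate still to be moved, so `y i` is not yet a node.
    have hfresh : y i ∉ Set.range x := by
      rintro ⟨j, hj⟩
      by_cases hjy : x j = y j
      · have hji : j = i := hy (hjy.symm.trans hj)
        exact (mem_filter.mp hi).2 (hji ▸ hjy)
      · exact (hmax j (mem_filter.mpr ⟨mem_univ j, hjy⟩)).not_gt (hj ▸ hxi)
    calc divDiff f k x ≤ divDiff f k (update x i (y i)) :=
          htone.divDiff_le_divDiff_update hx hxs (hys i) hfresh hxi
      _ ≤ divDiff f k y := by
        refine ih (hx.update_of_notMem_range i hfresh) (fun j => ?_) (fun j => ?_) ?_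
        · rcases eq_or_ne j i with rfl | hj
          · simpa using hys j
          · simpa [update_of_ne hj] using hxs j
        · rcases eq_or_ne j i with rfl | hj
          · simp
          · simpa [update_of_ne hj] using hxy j
        · have hD : ({j | update x i (y i) j ≠ y j} : Finset _) =
              ({j | x j ≠ y j} : Finset _).erase i := by
            ext j
            rcases eq_or_ne j i with rfl | hj <;> simp [update_of_ne, *]
          rw [hD, card_erase_of_mem hi, hn, Nat.add_sub_cancel]

end Tone

theorem divDiff_mono_of_ktone_general (f : ℝ → ℝ) (a b : ℝ) (k : ℕ)
    (htone : ∀ z : Fin (k + 2) → ℝ, Function.Injective z →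
      (∀ i, z i ∈ Set.Ioo a b) → 0 ≤ divDiff f (k + 1) z)
    (x y : Fin (k + 1) → ℝ) (hx : Function.Injective x) (hy : Function.Injective y)
    (hxm : ∀ i, x i ∈ Set.Ioo a b) (hym : ∀ i, y i ∈ Set.Ioo a b)
    (hxy : ∀ i, x i < y i) :
    divDiff f k x ≤ divDiff f k y :=
  IsTone.divDiff_le_divDiff (s := Set.Ioo a b) htone hx hy hxm hym fun i => (hxy i).le

theorem divDiff_mono_of_ktone (f : ℝ → ℝ) (a b : ℝ) (k : ℕ) (hk : 1 ≤ k)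
    (htone : ∀ z : Fin (k + 2) → ℝ, Function.Injective z →
      (∀ i, z i ∈ Set.Ioo a b) → 0 ≤ divDiff f (k + 1) z)
    (x y : Fin (k + 1) → ℝ) (hx : Function.Injective x) (hy : Function.Injective y)
    (hxm : ∀ i, x i ∈ Set.Ioo a b) (hym : ∀ i, y i ∈ Set.Ioo a b)
    (hxy : ∀ i, x i < y i) :
    divDiff f k x ≤ divDiff f k y :=
  divDiff_mono_of_ktone_general f a b k htone x y hx hy hxm hym hxy
end

section
/- Let {f_m} be a sequence of C^1 functions on [a,b] such that the limits lim f_m(a) and lim f_m(b) exist and are finite, each f_m' is convex on [a,b], and there is K > 0 with f_m'(x) ≤ K for all x ∈ [a,b] and all m. Then the sequence {f_m'} is uniformly bounded on [a,b], and consequently {f_m} is uniformly equicontinuous on [a,b]. -/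
lemma bdd_of_tendsto {u : ℕ → ℝ} {L : ℝ}
    (h : Filter.Tendsto u Filter.atTop (nhds L)) : ∃ C, ∀ n, |u n| ≤ C := by
  obtain ⟨R, hR, hd⟩ := cauchySeq_bdd h.cauchySeq
  refine ⟨|u 0| + R, fun n => ?_⟩
  have h1 := hd n 0
  rw [Real.dist_eq] at h1
  calc |u n| = |(u n - u 0) + u 0| := by ring_nf
    _ ≤ |u n - u 0| + |u 0| := abs_add_le _ _
    _ ≤ |u 0| + R := by linarith

lemma aux_lower {s : Set ℝ} {g : ℝ → ℝ} (hconv : ConvexOn ℝ s g)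
    {x c₁ c₂ B D d : ℝ} (hx : x ∈ s) (h2 : c₂ ∈ s)
    (hx1 : x < c₁) (h12 : c₁ < c₂)
    (hB : 0 ≤ B) (hg1 : |g c₁| ≤ B) (hg2 : |g c₂| ≤ B)
    (hd0 : 0 < d) (hd : d ≤ c₂ - c₁) (hD : c₁ - x ≤ D) :
    -(B + D * (2 * B) / d) ≤ g x := by
  have hD0 : 0 < D := lt_of_lt_of_le (by linarith) hD
  have hnn : 0 ≤ D * (2 * B) / d := by positivity
  have hs := hconv.slope_mono_adjacent hx h2 hx1 h12
  have hcx : 0 < c₁ - x := by linarith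
  have h1' : g c₁ - g x ≤ (g c₂ - g c₁) / (c₂ - c₁) * (c₁ - x) :=
    (div_le_iff₀ hcx).mp hs
  rcases le_or_gt ((g c₂ - g c₁) / (c₂ - c₁)) 0 with h | h
  · have : (g c₂ - g c₁) / (c₂ - c₁) * (c₁ - x) ≤ 0 :=
      mul_nonpos_of_nonpos_of_nonneg h (le_of_lt hcx)
    have hg1' := abs_le.mp hg1
    linarith
  · have hnum : g c₂ - g c₁ ≤ 2 * B := by
      have := abs_le.mp hg1; have := abs_le.mp hg2; linarith
    have hslope : (g c₂ - g c₁) / (c₂ - c₁) ≤ 2 * B / d :=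
      div_le_div₀ (by linarith) hnum hd0 hd
    have : (g c₂ - g c₁) / (c₂ - c₁) * (c₁ - x) ≤ 2 * B / d * D := by
      have h1 : (g c₂ - g c₁) / (c₂ - c₁) * (c₁ - x) ≤ (g c₂ - g c₁) / (c₂ - c₁) * D :=
        mul_le_mul_of_nonneg_left hD (le_of_lt h)
      have h2' : (g c₂ - g c₁) / (c₂ - c₁) * D ≤ 2 * B / d * D :=
        mul_le_mul_of_nonneg_right hslope (le_of_lt hD0)
      linarith
    have heq : 2 * B / d * D = D * (2 * B) / d := by ring
    have hg1' := abs_le.mp hg1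
    linarith [heq ▸ this]

lemma aux_lower' {s : Set ℝ} {g : ℝ → ℝ} (hconv : ConvexOn ℝ s g)
    {x c₁ c₂ B D d : ℝ} (hx : x ∈ s) (h2 : c₂ ∈ s)
    (h21 : c₂ < c₁) (h1x : c₁ < x)
    (hB : 0 ≤ B) (hg1 : |g c₁| ≤ B) (hg2 : |g c₂| ≤ B)
    (hd0 : 0 < d) (hd : d ≤ c₁ - c₂) (hD : x - c₁ ≤ D) :
    -(B + D * (2 * B) / d) ≤ g x := by
  have hD0 : 0 < D := lt_of_lt_of_le (by linarith) hD
  have hnn : 0 ≤ D * (2 * B) / d := by positivity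
  have hs := hconv.slope_mono_adjacent h2 hx h21 h1x
  have hx1 : 0 < x - c₁ := by linarith
  have h1' : (g c₁ - g c₂) / (c₁ - c₂) * (x - c₁) ≤ g x - g c₁ :=
    (le_div_iff₀ hx1).mp hs
  rcases le_or_gt 0 ((g c₁ - g c₂) / (c₁ - c₂)) with h | h
  · have : 0 ≤ (g c₁ - g c₂) / (c₁ - c₂) * (x - c₁) :=
      mul_nonneg h (le_of_lt hx1)
    have hg1' := abs_le.mp hg1
    linarith
  · have hnum : -(2 * B) ≤ g c₁ - g c₂ := by
      have := abs_le.mp hg1; have := abs_le.mp hg2; linarith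
    have hslope : -(2 * B) / d ≤ (g c₁ - g c₂) / (c₁ - c₂) := by
      have hden : (0:ℝ) < c₁ - c₂ := by linarith
      have hnum' : g c₁ - g c₂ < 0 := by
        by_contra hcon
        push_neg at hcon
        exact absurd (div_nonneg hcon hden.le) (not_le.mpr h)
      rw [div_le_div_iff₀ hd0 hden]
      have t1 : (g c₁ - g c₂) * (c₁ - c₂) ≤ (g c₁ - g c₂) * d := by
        nlinarith [mul_nonneg (neg_nonneg.mpr hnum'.le) (sub_nonneg.mpr hd)]
      have t2 : -(2 * B) * (c₁ - c₂) ≤ (g c₁ - g c₂) * (c₁ - c₂) := by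
        nlinarith [mul_nonneg (by linarith : (0:ℝ) ≤ g c₁ - g c₂ + 2 * B) hden.le]
      linarith
    have : -(2 * B) / d * D ≤ (g c₁ - g c₂) / (c₁ - c₂) * (x - c₁) := by
      have h1 : (g c₁ - g c₂) / (c₁ - c₂) * D ≤ (g c₁ - g c₂) / (c₁ - c₂) * (x - c₁) := by
        have := mul_le_mul_of_nonpos_left hD (le_of_lt h)
        linarith
      have h2' : -(2 * B) / d * D ≤ (g c₁ - g c₂) / (c₁ - c₂) * D :=
        mul_le_mul_of_nonneg_right hslope (le_of_lt hD0)
      linarith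
    have heq : -(2 * B) / d * D = -(D * (2 * B) / d) := by ring
    have hg1' := abs_le.mp hg1
    linarith [heq ▸ this]


theorem unif_bounded_and_equicontinuous (a b : ℝ) (hab : a < b)
    (f g : ℕ → ℝ → ℝ) (K : ℝ) (hK : 0 < K)
    (hderiv : ∀ m, ∀ x ∈ Set.Icc a b, HasDerivAt (f m) (g m x) x)
    (hcont : ∀ m, ContinuousOn (g m) (Set.Icc a b))
    (hconv : ∀ m, ConvexOn ℝ (Set.Icc a b) (g m))
    (hbound : ∀ m, ∀ x ∈ Set.Icc a b, g m x ≤ K)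
    (ha : ∃ La, Filter.Tendsto (fun m => f m a) Filter.atTop (nhds La))
    (hb : ∃ Lb, Filter.Tendsto (fun m => f m b) Filter.atTop (nhds Lb)) :
    (∃ M, ∀ m, ∀ x ∈ Set.Icc a b, |g m x| ≤ M) ∧
    ∀ ε > 0, ∃ δ > 0, ∀ m, ∀ x ∈ Set.Icc a b, ∀ y ∈ Set.Icc a b,
      |x - y| < δ → |f m x - f m y| < ε := by
  obtain ⟨La, hLa⟩ := ha
  obtain ⟨Lb, hLb⟩ := hb
  obtain ⟨Ca, hCa⟩ := bdd_of_tendsto hLa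
  obtain ⟨Cb, hCb⟩ := bdd_of_tendsto hLb
  set L : ℝ := b - a with hLdef
  have hL0 : 0 < L := by simp only [hLdef]; linarith
  set C : ℝ := |Ca| + |Cb| with hCdef
  have hC0 : 0 ≤ C := by positivity
  have hCa' : ∀ m, |f m a| ≤ C := fun m =>
    le_trans (hCa m) (by simp only [hCdef]; have := abs_nonneg Cb; linarith [le_abs_self Ca])
  have hCb' : ∀ m, |f m b| ≤ C := fun m =>
    le_trans (hCb m) (by simp only [hCdef]; have := abs_nonneg Ca; linarith [le_abs_self Cb])
  -- mean value theorem on subintervals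
  have hmvt : ∀ m p q, a ≤ p → q ≤ b → p < q →
      ∃ c ∈ Set.Ioo p q, g m c = (f m q - f m p) / (q - p) := by
    intro m p q hp hq hpq
    have hsub : Set.Icc p q ⊆ Set.Icc a b := Set.Icc_subset_Icc hp hq
    have hcc : ContinuousOn (f m) (Set.Icc p q) := fun t ht =>
      ((hderiv m t (hsub ht)).continuousAt).continuousWithinAt
    have hdd : ∀ x ∈ Set.Ioo p q, HasDerivAt (f m) (g m x) x := fun t ht =>
      hderiv m t (hsub (Set.Ioo_subset_Icc_self ht))
    exact exists_hasDerivAt_eq_slope (f m) (g m) hpq hcc hdd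
  -- upper Lipschitz bound, hence uniform bound on f
  have hlip : ∀ m, ∀ x ∈ Set.Icc a b, ∀ y ∈ Set.Icc a b, x ≤ y →
      f m y - f m x ≤ K * (y - x) := by
    intro m x hx y hy hxy
    rcases eq_or_lt_of_le hxy with rfl | hlt
    · simp
    · obtain ⟨c, hc, hceq⟩ := hmvt m x y hx.1 hy.2 hlt
      have hcmem : c ∈ Set.Icc a b :=
        Set.Icc_subset_Icc hx.1 hy.2 (Set.Ioo_subset_Icc_self hc)
      have h1 : (f m y - f m x) / (y - x) ≤ K := hceq ▸ hbound m c hcmem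
      have h2 : 0 < y - x := by linarith
      calc f m y - f m x = (f m y - f m x) / (y - x) * (y - x) := by field_simp
        _ ≤ K * (y - x) := mul_le_mul_of_nonneg_right h1 h2.le
  set C' : ℝ := C + K * L with hC'def
  have hC'0 : 0 < C' := by positivity
  have hfb : ∀ m, ∀ x ∈ Set.Icc a b, |f m x| ≤ C' := by
    intro m x hx
    have hA : a ∈ Set.Icc a b := Set.left_mem_Icc.mpr hab.le
    have hB : b ∈ Set.Icc a b := Set.right_mem_Icc.mpr hab.le
    have h1 : f m x - f m a ≤ K * (x - a) := hlip m a hA x hx hx.1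
    have h2 : f m b - f m x ≤ K * (b - x) := hlip m x hx b hB hx.2
    have hxa : K * (x - a) ≤ K * L := by
      apply mul_le_mul_of_nonneg_left _ hK.le
      simp only [hLdef]; linarith [hx.2]
    have hbx : K * (b - x) ≤ K * L := by
      apply mul_le_mul_of_nonneg_left _ hK.le
      simp only [hLdef]; linarith [hx.1]
    have ha' := abs_le.mp (hCa' m)
    have hb' := abs_le.mp (hCb' m)
    rw [abs_le]
    constructor <;> simp only [hC'def] <;> linarith
  set B : ℝ := 2 * C' / (L / 8) with hBdef
  have hB0 : 0 ≤ B := by positivity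
  -- bound on g at a MVT point of an interval of length L/8
  have hgc : ∀ m p q, a ≤ p → q ≤ b → q - p = L / 8 →
      ∃ c ∈ Set.Ioo p q, |g m c| ≤ B := by
    intro m p q hp hq hlen
    have hpq : p < q := by
      have h8 : 0 < L / 8 := by linarith
      linarith
    obtain ⟨c, hc, hceq⟩ := hmvt m p q hp hq hpq
    refine ⟨c, hc, ?_⟩
    have hpmem : p ∈ Set.Icc a b := ⟨hp, by linarith⟩
    have hqmem : q ∈ Set.Icc a b := ⟨by linarith, hq⟩
    have hnum : |f m q - f m p| ≤ 2 * C' := by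
      calc |f m q - f m p| ≤ |f m q| + |f m p| := abs_sub _ _
        _ ≤ 2 * C' := by linarith [hfb m p hpmem, hfb m q hqmem]
    rw [hceq, abs_div, abs_of_pos (by linarith : (0:ℝ) < q - p), hlen, hBdef]
    exact div_le_div₀ (by positivity) hnum (by linarith) le_rfl
  set M : ℝ := max K (B + L * (2 * B) / (L / 8)) with hMdef
  have hMK : K ≤ M := le_max_left _ _
  have hM0 : 0 < M := lt_of_lt_of_le hK hMK
  have hlow : ∀ m, ∀ x ∈ Set.Icc a b, -M ≤ g m x := by
    intro m x hx
    have hgoal : -(B + L * (2 * B) / (L / 8)) ≤ g m x := by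
      have hm0 : a ≤ (a + b) / 2 := by linarith
      rcases le_or_gt x ((a + b) / 2) with hxm | hxm
      · -- use points to the right
        obtain ⟨c₁, hc₁, hb₁⟩ := hgc m ((a + b) / 2) ((a + b) / 2 + L / 8) hm0
          (by simp only [hLdef]; linarith) (by ring)
        obtain ⟨c₂, hc₂, hb₂⟩ := hgc m ((a + b) / 2 + L / 4) ((a + b) / 2 + 3 * L / 8)
          (by linarith) (by simp only [hLdef]; linarith) (by ring)
        have hc₂mem : c₂ ∈ Set.Icc a b := by
          constructor
          · linarith [hc₂.1]
          · have := hc₂.2; simp only [hLdef] at this ⊢; linarith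
        exact aux_lower (hconv m) hx hc₂mem
          (by linarith [hc₁.1]) (by linarith [hc₁.2, hc₂.1])
          hB0 hb₁ hb₂ (by linarith) (by linarith [hc₁.2, hc₂.1])
          (by have h1 := hc₁.2; have h2 := hx.1; simp only [hLdef] at h1 ⊢; linarith)
      · -- use points to the left
        obtain ⟨c₁, hc₁, hb₁⟩ := hgc m ((a + b) / 2 - L / 8) ((a + b) / 2)
          (by simp only [hLdef]; linarith) (by linarith) (by ring)
        obtain ⟨c₂, hc₂, hb₂⟩ := hgc m ((a + b) / 2 - 3 * L / 8) ((a + b) / 2 - L / 4)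
          (by simp only [hLdef]; linarith) (by linarith) (by ring)
        have hc₂mem : c₂ ∈ Set.Icc a b := by
          constructor
          · have := hc₂.1; simp only [hLdef] at this ⊢; linarith
          · linarith [hc₂.2]
        exact aux_lower' (hconv m) hx hc₂mem
          (by linarith [hc₂.2, hc₁.1]) (by linarith [hc₁.2])
          hB0 hb₁ hb₂ (by linarith) (by linarith [hc₂.2, hc₁.1])
          (by have h1 := hc₁.1; have h2 := hx.2; simp only [hLdef] at h1 ⊢; linarith)
    have : B + L * (2 * B) / (L / 8) ≤ M := le_max_right _ _
    linarith
  have habs : ∀ m, ∀ x ∈ Set.Icc a b, |g m x| ≤ M := fun m x hx =>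
    abs_le.mpr ⟨hlow m x hx, le_trans (hbound m x hx) hMK⟩
  refine ⟨⟨M, habs⟩, ?_⟩
  intro ε hε
  refine ⟨ε / M, by positivity, fun m x hx y hy hxy => ?_⟩
  have hlipM : ‖f m x - f m y‖ ≤ M * ‖x - y‖ :=
    Convex.norm_image_sub_le_of_norm_hasDerivWithin_le
      (fun t ht => (hderiv m t ht).hasDerivWithinAt)
      (fun t ht => by rw [Real.norm_eq_abs]; exact habs m t ht)
      (convex_Icc a b) hy hx
  rw [Real.norm_eq_abs, Real.norm_eq_abs] at hlipM
  calc |f m x - f m y| ≤ M * |x - y| := hlipM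
    _ < M * (ε / M) := by exact mul_lt_mul_of_pos_left hxy hM0
    _ = ε := by field_simp
end

section
/- Suppose g : [a,b] → ℝ is convex and g(x) ≤ 0 for all x ∈ [a,b]. Then for every x ∈ [a,b], ∫_a^b g(t) dt ≤ ((b−a)/2) g(x). In particular, any nonpositive convex function on [a,b] is bounded below by (2/(b−a)) ∫_a^b g(t) dt. -/
/-!
A convex function lies below its chords, so integrating the chord gives the trapezoid bound
`∫_c^d g ≤ (d - c) (g c + g d) / 2`. Apply it on `[a, x]` and on `[x, b]`: since `g a ≤ 0` and
`g b ≤ 0`, only the two copies of `g x` survive, giving `∫_a^b g ≤ (b - a) / 2 · g x`.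
-/

open Set intervalIntegral

lemma ConvexOn.le_chord_of_mem_Icc {c d : ℝ} {g : ℝ → ℝ} (hg : ConvexOn ℝ (Icc c d) g)
    (hcd : c < d) {t : ℝ} (ht : t ∈ Icc c d) :
    g t ≤ ((d - t) * g c + (t - c) * g d) / (d - c) := by
  have hdc : 0 < d - c := sub_pos.2 hcd
  have key := hg.2 (left_mem_Icc.2 hcd.le) (right_mem_Icc.2 hcd.le)
    (div_nonneg (sub_nonneg.2 ht.2) hdc.le) (div_nonneg (sub_nonneg.2 ht.1) hdc.le)
    (by field_simp; ring)
  rw [smul_eq_mul, smul_eq_mul, smul_eq_mul, smul_eq_mul,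
    show (d - t) / (d - c) * c + (t - c) / (d - c) * d = t by field_simp; ring] at key
  rwa [add_div, mul_div_right_comm, mul_div_right_comm (t - c)]

lemma integral_linear_interpolation (c d A B : ℝ) :
    ∫ t in c..d, ((d - t) * A + (t - c) * B) / (d - c) = (d - c) * (A + B) / 2 := by
  rcases eq_or_ne c d with rfl | hcd
  · simp
  have hdc : d - c ≠ 0 := sub_ne_zero.2 hcd.symm
  rw [integral_div, integral_add, integral_mul_const, integral_mul_const,
    integral_comp_sub_left (fun t => t), integral_comp_sub_right (fun t => t)]
  · simp only [integral_id]
    field_simp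
    ring
  all_goals exact Continuous.intervalIntegrable (by fun_prop) c d

lemma ConvexOn.intervalIntegral_le_trapezoid {c d : ℝ} {g : ℝ → ℝ}
    (hg : ConvexOn ℝ (Icc c d) g) (hcd : c ≤ d)
    (hint : IntervalIntegrable g MeasureTheory.volume c d) :
    ∫ t in c..d, g t ≤ (d - c) * (g c + g d) / 2 := by
  rcases hcd.eq_or_lt with rfl | hcd
  · simp
  calc ∫ t in c..d, g t ≤ ∫ t in c..d, ((d - t) * g c + (t - c) * g d) / (d - c) :=
        integral_mono_on hcd.le hint (Continuous.intervalIntegrable (by fun_prop) c d)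
          fun t ht => hg.le_chord_of_mem_Icc hcd ht
    _ = (d - c) * (g c + g d) / 2 := integral_linear_interpolation c d _ _

theorem integral_le_of_convex_nonpos (a b : ℝ) (hab : a < b) (g : ℝ → ℝ)
    (hconv : ConvexOn ℝ (Set.Icc a b) g) (hneg : ∀ x ∈ Set.Icc a b, g x ≤ 0)
    (hint : IntervalIntegrable g MeasureTheory.volume a b) :
    (∀ x ∈ Set.Icc a b, (∫ t in a..b, g t) ≤ (b - a) / 2 * g x) ∧
    ∀ x ∈ Set.Icc a b, 2 / (b - a) * ∫ t in a..b, g t ≤ g x := by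
  have bound : ∀ x ∈ Icc a b, ∫ t in a..b, g t ≤ (b - a) / 2 * g x := by
    intro x hx
    have hint_left := hint.mono_set (uIcc_subset_uIcc_left (Icc_subset_uIcc hx))
    have hint_right := hint.mono_set (uIcc_subset_uIcc_right (Icc_subset_uIcc hx))
    have left := ConvexOn.intervalIntegral_le_trapezoid
      (hconv.subset (Icc_subset_Icc_right hx.2) (convex_Icc a x)) hx.1 hint_left
    have right := ConvexOn.intervalIntegral_le_trapezoid
      (hconv.subset (Icc_subset_Icc_left hx.1) (convex_Icc x b)) hx.2 hint_right
    rw [← integral_add_adjacent_intervals hint_left hint_right]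
    nlinarith [mul_nonpos_of_nonneg_of_nonpos (sub_nonneg.2 hx.1) (hneg a (left_mem_Icc.2 hab.le)),
      mul_nonpos_of_nonneg_of_nonpos (sub_nonneg.2 hx.2) (hneg b (right_mem_Icc.2 hab.le))]
  refine ⟨bound, fun x hx => ?_⟩
  have hba : b - a ≠ 0 := (sub_pos.2 hab).ne'
  calc 2 / (b - a) * ∫ t in a..b, g t ≤ 2 / (b - a) * ((b - a) / 2 * g x) :=
        mul_le_mul_of_nonneg_left (bound x hx) (div_nonneg zero_le_two (sub_nonneg.2 hab.le))
    _ = g x := by field_simp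
end

section
/- Let g : (a,b) → ℝ be a C^∞ function such that g and all its even derivatives g'', g^{(4)}, … are nonnegative on (a,b). Then g is real-analytic on (a,b), and for every x ∈ (a,b) the radius of convergence of the Taylor series of g at x is at least min{x−a, b−x}. -/
set_option maxHeartbeats 1000000

open Set Finset Filter Topology

/-- If `ψ'' ≥ 0` on an open interval and `ψ x = ψ' x = 0`, then `ψ ≥ 0` on the interval. -/
private lemma dd_nonneg {c d x : ℝ} (ψ ψ' ψ'' : ℝ → ℝ)
    (h1 : ∀ z ∈ Set.Ioo c d, HasDerivAt ψ (ψ' z) z)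
    (h2 : ∀ z ∈ Set.Ioo c d, HasDerivAt ψ' (ψ'' z) z)
    (hnn : ∀ z ∈ Set.Ioo c d, 0 ≤ ψ'' z)
    (hx : x ∈ Set.Ioo c d) (hψx : ψ x = 0) (hψ'x : ψ' x = 0) :
    ∀ y ∈ Set.Ioo c d, 0 ≤ ψ y := by
  have hmono : MonotoneOn ψ' (Set.Ioo c d) := by
    apply monotoneOn_of_deriv_nonneg (convex_Ioo c d)
    · exact fun z hz => (h2 z hz).continuousAt.continuousWithinAt
    · intro z hz
      rw [interior_Ioo] at hz
      exact (h2 z hz).differentiableAt.differentiableWithinAt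
    · intro z hz
      rw [interior_Ioo] at hz
      rw [(h2 z hz).deriv]
      exact hnn z hz
  intro y hy
  rcases lt_trichotomy x y with hxy | hxy | hxy
  · have hsub : Set.Icc x y ⊆ Set.Ioo c d := fun z hz =>
      ⟨lt_of_lt_of_le hx.1 hz.1, lt_of_le_of_lt hz.2 hy.2⟩
    obtain ⟨ξ, hξ, hval⟩ := exists_hasDerivAt_eq_slope ψ ψ' hxy
      (fun z hz => (h1 z (hsub hz)).continuousAt.continuousWithinAt)
      (fun z hz => h1 z (hsub (Set.Ioo_subset_Icc_self hz)))
    have hξs : ξ ∈ Set.Ioo c d := hsub (Set.Ioo_subset_Icc_self hξ)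
    have h0 : 0 ≤ ψ' ξ := by
      rw [← hψ'x]; exact hmono hx hξs hξ.1.le
    have heq : ψ y - ψ x = ψ' ξ * (y - x) := by
      rw [hval, div_mul_cancel₀]
      exact sub_ne_zero_of_ne hxy.ne'
    nlinarith [mul_nonneg h0 (sub_nonneg.mpr hxy.le)]
  · rw [← hxy]; exact le_of_eq hψx.symm
  · have hsub : Set.Icc y x ⊆ Set.Ioo c d := fun z hz =>
      ⟨lt_of_lt_of_le hy.1 hz.1, lt_of_le_of_lt hz.2 hx.2⟩
    obtain ⟨ξ, hξ, hval⟩ := exists_hasDerivAt_eq_slope ψ ψ' hxy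
      (fun z hz => (h1 z (hsub hz)).continuousAt.continuousWithinAt)
      (fun z hz => h1 z (hsub (Set.Ioo_subset_Icc_self hz)))
    have hξs : ξ ∈ Set.Ioo c d := hsub (Set.Ioo_subset_Icc_self hξ)
    have h0 : ψ' ξ ≤ 0 := by
      rw [← hψ'x]; exact hmono hξs hx hξ.2.le
    have heq : ψ x - ψ y = ψ' ξ * (x - y) := by
      rw [hval, div_mul_cancel₀]
      exact sub_ne_zero_of_ne hxy.ne'
    nlinarith [mul_nonpos_of_nonpos_of_nonneg h0 (sub_nonneg.mpr hxy.le)]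

private lemma hasDerivAt_monomial (B x y : ℝ) (k : ℕ) :
    HasDerivAt (fun z => B / (k+1).factorial * (z - x) ^ (k+1))
      (B / k.factorial * (y - x) ^ k) y := by
  have h := (((hasDerivAt_id y).sub_const x).pow (k+1)).const_mul (B / (k+1).factorial)
  refine h.congr_deriv ?_
  simp only [id_eq]
  have h1 : ((k+1).factorial : ℝ) ≠ 0 := Nat.cast_ne_zero.mpr (k+1).factorial_ne_zero
  have h2 : (k.factorial : ℝ) ≠ 0 := Nat.cast_ne_zero.mpr k.factorial_ne_zero
  rw [Nat.factorial_succ]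
  simp only [Nat.add_sub_cancel]
  push_cast
  field_simp

private lemma hasDerivAt_taylorSum (c : ℕ → ℝ) (x y : ℝ) (N : ℕ) :
    HasDerivAt (fun z => ∑ j ∈ Finset.range (N+1), c j / j.factorial * (z - x) ^ j)
      (∑ j ∈ Finset.range N, c (j+1) / j.factorial * (y - x) ^ j) y := by
  have h : ∀ j ∈ Finset.range (N+1), HasDerivAt
      (fun z => c j / j.factorial * (z - x) ^ j)
      (c j / j.factorial * ((j:ℝ) * (y - x) ^ (j-1) * 1)) y :=
    fun j _ => (((hasDerivAt_id y).sub_const x).pow j).const_mul (c j / j.factorial)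
  have hsum := HasDerivAt.fun_sum h
  refine hsum.congr_deriv (Eq.symm ?_)
  rw [Finset.sum_range_succ']
  simp only [Nat.cast_zero, pow_zero, Nat.factorial_zero, Nat.cast_one, zero_mul, mul_zero,
    mul_one, add_zero, Nat.add_sub_cancel]
  apply Finset.sum_congr rfl
  intro j _
  have h2 : (j.factorial : ℝ) ≠ 0 := Nat.cast_ne_zero.mpr j.factorial_ne_zero
  have h3 : ((j:ℝ) + 1) ≠ 0 := by positivity
  rw [Nat.factorial_succ]
  push_cast
  field_simp

private lemma taylorSum_center (c : ℕ → ℝ) (x : ℝ) (N : ℕ) (hN : 0 < N) :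
    ∑ j ∈ Finset.range N, c j / j.factorial * (x - x) ^ j = c 0 := by
  rw [Finset.sum_eq_single 0]
  · simp
  · intro j _ hj
    simp [sub_self, zero_pow hj]
  · intro h
    exact absurd (Finset.mem_range.mpr hN) h

noncomputable def Qaux (D : ℕ → ℝ → ℝ) (m : ℕ) (x : ℝ) (i : ℕ) (z : ℝ) : ℝ :=
  D i z - ∑ j ∈ Finset.range (2*m - i), D (i+j) x / j.factorial * (z - x) ^ j

private lemma Qaux_deriv {c d : ℝ} (D : ℕ → ℝ → ℝ)
    (hD : ∀ n, ∀ z ∈ Set.Ioo c d, HasDerivAt (D n) (D (n+1) z) z)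
    (m : ℕ) (x : ℝ) (i : ℕ) :
    ∀ z ∈ Set.Ioo c d, HasDerivAt (Qaux D m x i) (Qaux D m x (i+1) z) z := by
  intro z hz
  rcases lt_or_ge i (2*m) with hi | hi
  · have hN : 2*m - i = (2*m - (i+1)) + 1 := by omega
    have h2 := hasDerivAt_taylorSum (fun j => D (i+j) x) x z (2*m - (i+1))
    have h3 : HasDerivAt
        (fun w => ∑ j ∈ Finset.range (2*m - i), D (i+j) x / j.factorial * (w - x)^j)
        (∑ j ∈ Finset.range (2*m - (i+1)), D (i+1+j) x / j.factorial * (z - x)^j) z := by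
      have h4 : (∑ j ∈ Finset.range (2*m - (i+1)), D (i+(j+1)) x / j.factorial * (z - x)^j)
          = ∑ j ∈ Finset.range (2*m - (i+1)), D (i+1+j) x / j.factorial * (z - x)^j :=
        Finset.sum_congr rfl (fun j _ => by rw [show i + (j+1) = i+1+j from by omega])
      rw [hN, ← h4]
      exact h2
    exact ((hD i z hz).sub h3 : _)
  · have hN0 : 2*m - i = 0 := by omega
    have hN1 : 2*m - (i+1) = 0 := by omega
    unfold Qaux
    rw [hN0, hN1]
    simpa using (hD i z hz).sub_const 0

private lemma Qaux_center (D : ℕ → ℝ → ℝ) (m : ℕ) (x : ℝ) (i : ℕ) (hi : i < 2*m) :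
    Qaux D m x i x = 0 := by
  unfold Qaux
  rw [taylorSum_center (fun j => D (i+j) x) x _ (by omega)]
  simp

private lemma Qaux_top (D : ℕ → ℝ → ℝ) (m : ℕ) (x : ℝ) (i : ℕ) (hi : 2*m ≤ i) (z : ℝ) :
    Qaux D m x i z = D i z := by
  unfold Qaux
  rw [Nat.sub_eq_zero_of_le hi]
  simp

private lemma taylor_lower_bound {c d : ℝ} (D : ℕ → ℝ → ℝ)
    (hD : ∀ n, ∀ z ∈ Set.Ioo c d, HasDerivAt (D n) (D (n+1) z) z)
    (m : ℕ)
    (hDm : ∀ z ∈ Set.Ioo c d, 0 ≤ D (2*m) z)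
    {x : ℝ} (hx : x ∈ Set.Ioo c d) :
    ∀ y ∈ Set.Ioo c d,
      ∑ j ∈ Finset.range (2*m), D j x / j.factorial * (y - x) ^ j ≤ D 0 y := by
  have main : ∀ j, j ≤ m → ∀ y ∈ Set.Ioo c d, 0 ≤ Qaux D m x (2*(m-j)) y := by
    intro j
    induction j with
    | zero =>
      intro _ y hy
      rw [Nat.sub_zero, Qaux_top D m x (2*m) le_rfl y]
      exact hDm y hy
    | succ j ih =>
      intro hj y hy
      have hij : 2*(m - (j+1)) + 1 + 1 = 2*(m-j) := by omega
      apply dd_nonneg (Qaux D m x (2*(m-(j+1)))) (Qaux D m x (2*(m-(j+1))+1))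
          (Qaux D m x (2*(m-(j+1))+1+1))
          (Qaux_deriv D hD m x _) (Qaux_deriv D hD m x _)
          (fun z hz => by rw [hij]; exact ih (by omega) z hz)
          hx (Qaux_center D m x _ (by omega)) (Qaux_center D m x _ (by omega)) y hy
  intro y hy
  have h := main m le_rfl y hy
  unfold Qaux at h
  simp only [Nat.sub_self, Nat.mul_zero, Nat.sub_zero, Nat.zero_add, zero_add] at h
  linarith

private lemma taylor_upper_bound {c d : ℝ} (D : ℕ → ℝ → ℝ)
    (hD : ∀ n, ∀ z ∈ Set.Ioo c d, HasDerivAt (D n) (D (n+1) z) z)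
    (m : ℕ) (B : ℝ)
    (hB : ∀ z ∈ Set.Ioo c d, D (2*m) z ≤ B)
    {x : ℝ} (hx : x ∈ Set.Ioo c d) :
    ∀ y ∈ Set.Ioo c d,
      D 0 y - ∑ j ∈ Finset.range (2*m), D j x / j.factorial * (y - x) ^ j
        ≤ B / (2*m).factorial * (y - x) ^ (2*m) := by
  have main : ∀ j, j ≤ m → ∀ y ∈ Set.Ioo c d,
      Qaux D m x (2*(m-j)) y ≤ B / (2*j).factorial * (y - x) ^ (2*j) := by
    intro j
    induction j with
    | zero =>
      intro _ y hy
      rw [Nat.sub_zero, Qaux_top D m x (2*m) le_rfl y]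
      simpa using hB y hy
    | succ j ih =>
      intro hj y hy
      have hij : 2*(m - (j+1)) + 1 + 1 = 2*(m-j) := by omega
      have hexp : 2*(j+1) = 2*j+1+1 := by omega
      have key := dd_nonneg
        (fun z => B / (2*j+1+1).factorial * (z - x) ^ (2*j+1+1) - Qaux D m x (2*(m-(j+1))) z)
        (fun z => B / (2*j+1).factorial * (z - x) ^ (2*j+1) - Qaux D m x (2*(m-(j+1))+1) z)
        (fun z => B / (2*j).factorial * (z - x) ^ (2*j) - Qaux D m x (2*(m-(j+1))+1+1) z)
        (fun z hz => (hasDerivAt_monomial B x z (2*j+1)).sub (Qaux_deriv D hD m x _ z hz))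
        (fun z hz => (hasDerivAt_monomial B x z (2*j)).sub (Qaux_deriv D hD m x _ z hz))
        (fun z hz => by
          rw [hij]
          have := ih (by omega) z hz
          linarith)
        hx
        (by
          show B / (2*j+1+1).factorial * (x - x) ^ (2*j+1+1)
            - Qaux D m x (2*(m-(j+1))) x = 0
          rw [Qaux_center D m x _ (by omega), sub_self, zero_pow (by omega : 2*j+1+1 ≠ 0)]
          ring)
        (by
          show B / (2*j+1).factorial * (x - x) ^ (2*j+1)
            - Qaux D m x (2*(m-(j+1))+1) x = 0
          rw [Qaux_center D m x _ (by omega), sub_self, zero_pow (by omega : 2*j+1 ≠ 0)]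
          ring)
        y hy
      rw [hexp]
      linarith
  intro y hy
  have h := main m le_rfl y hy
  unfold Qaux at h
  simp only [Nat.sub_self, Nat.mul_zero, Nat.sub_zero, Nat.zero_add, zero_add] at h
  linarith

private lemma odd_deriv_bound {c d : ℝ} (D : ℕ → ℝ → ℝ)
    (hD : ∀ n, ∀ z ∈ Set.Ioo c d, HasDerivAt (D n) (D (n+1) z) z)
    (hpos : ∀ n, ∀ z ∈ Set.Ioo c d, 0 ≤ D (2*n) z)
    (k : ℕ) {x h : ℝ} (hh : 0 < h)
    (hm1 : x - h ∈ Set.Ioo c d) (hm2 : x + h ∈ Set.Ioo c d) :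
    |D (2*k+1) x| ≤ (D (2*k) (x+h) + D (2*k) (x-h)) / h := by
  have hx : x ∈ Set.Ioo c d := ⟨by linarith [hm1.1], by linarith [hm2.2]⟩
  have hmono : MonotoneOn (D (2*k+1)) (Set.Ioo c d) := by
    apply monotoneOn_of_deriv_nonneg (convex_Ioo c d)
    · exact fun z hz => (hD (2*k+1) z hz).continuousAt.continuousWithinAt
    · intro z hz
      rw [interior_Ioo] at hz
      exact (hD (2*k+1) z hz).differentiableAt.differentiableWithinAt
    · intro z hz
      rw [interior_Ioo] at hz
      rw [(hD (2*k+1) z hz).deriv]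
      have := hpos (k+1) z hz
      rwa [show 2*(k+1) = 2*k+1+1 from by omega] at this
  have hsub1 : Set.Icc x (x+h) ⊆ Set.Ioo c d := fun z hz =>
    ⟨by linarith [hz.1, hx.1], by linarith [hz.2, hm2.2]⟩
  have hsub2 : Set.Icc (x-h) x ⊆ Set.Ioo c d := fun z hz =>
    ⟨by linarith [hz.1, hm1.1], by linarith [hz.2, hx.2]⟩
  obtain ⟨ξ, hξ, hvξ⟩ := exists_hasDerivAt_eq_slope (D (2*k)) (D (2*k+1))
    (by linarith : x < x + h)
    (fun z hz => (hD (2*k) z (hsub1 hz)).continuousAt.continuousWithinAt)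
    (fun z hz => hD (2*k) z (hsub1 (Set.Ioo_subset_Icc_self hz)))
  obtain ⟨η, hη, hvη⟩ := exists_hasDerivAt_eq_slope (D (2*k)) (D (2*k+1))
    (by linarith : x - h < x)
    (fun z hz => (hD (2*k) z (hsub2 hz)).continuousAt.continuousWithinAt)
    (fun z hz => hD (2*k) z (hsub2 (Set.Ioo_subset_Icc_self hz)))
  have hξs : ξ ∈ Set.Ioo c d := hsub1 (Set.Ioo_subset_Icc_self hξ)
  have hηs : η ∈ Set.Ioo c d := hsub2 (Set.Ioo_subset_Icc_self hη)
  have h1 : D (2*k+1) x ≤ D (2*k+1) ξ := hmono hx hξs hξ.1.le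
  have h2 : D (2*k+1) η ≤ D (2*k+1) x := hmono hηs hx hη.2.le
  have hu : 0 ≤ D (2*k) x := hpos k x hx
  have hA : 0 ≤ D (2*k) (x+h) := hpos k (x+h) hm2
  have hB : 0 ≤ D (2*k) (x-h) := hpos k (x-h) hm1
  rw [add_sub_cancel_left] at hvξ
  rw [sub_sub_cancel] at hvη
  have e1 : D (2*k+1) ξ * h = D (2*k) (x+h) - D (2*k) x := by
    rw [hvξ, div_mul_cancel₀ _ (ne_of_gt hh)]
  have e2 : D (2*k+1) η * h = D (2*k) x - D (2*k) (x-h) := by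
    rw [hvη, div_mul_cancel₀ _ (ne_of_gt hh)]
  rw [abs_le]
  constructor
  · rw [neg_le, le_div_iff₀ hh]
    nlinarith [mul_le_mul_of_nonneg_right h2 hh.le]
  · rw [le_div_iff₀ hh]
    nlinarith [mul_le_mul_of_nonneg_right h1 hh.le]

private lemma even_coeff_bound {c d : ℝ} (D : ℕ → ℝ → ℝ)
    (hD : ∀ n, ∀ z ∈ Set.Ioo c d, HasDerivAt (D n) (D (n+1) z) z)
    (hpos : ∀ n, ∀ z ∈ Set.Ioo c d, 0 ≤ D (2*n) z)
    (k : ℕ) {z t : ℝ} (h1 : z - t ∈ Set.Ioo c d) (h2 : z + t ∈ Set.Ioo c d) :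
    D (2*k) z / (2*k).factorial * t ^ (2*k) ≤ (D 0 (z+t) + D 0 (z-t)) / 2 := by
  have hz : z ∈ Set.Ioo c d := by
    rcases le_total 0 t with ht | ht
    · exact ⟨by linarith [h1.1], by linarith [h2.2]⟩
    · exact ⟨by linarith [h2.1], by linarith [h1.2]⟩
  have hlow1 := taylor_lower_bound D hD (k+1) (fun w hw => hpos (k+1) w hw) hz (z+t) h2
  have hlow2 := taylor_lower_bound D hD (k+1) (fun w hw => hpos (k+1) w hw) hz (z-t) h1
  rw [add_sub_cancel_left] at hlow1
  rw [sub_sub_cancel_left] at hlow2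
  have hnn : ∀ j ∈ Finset.range (2*(k+1)),
      0 ≤ D j z / j.factorial * t^j + D j z / j.factorial * (-t)^j := by
    intro j _
    rcases Nat.even_or_odd j with hje | hjo
    · obtain ⟨k', hk'⟩ := id hje
      have hD' : 0 ≤ D j z := by
        have := hpos k' z hz
        rwa [show 2*k' = k' + k' from by omega, ← hk'] at this
      have hp : 0 ≤ t ^ j := hje.pow_nonneg t
      rw [hje.neg_pow]
      have : 0 ≤ D j z / j.factorial :=
        div_nonneg hD' (Nat.cast_nonneg _)
      positivity
    · rw [hjo.neg_pow]
      ring_nf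
      simp
  have hmem : 2*k ∈ Finset.range (2*(k+1)) := Finset.mem_range.mpr (by omega)
  have hsingle := Finset.single_le_sum hnn hmem
  have heven : Even (2*k) := even_two_mul k
  rw [heven.neg_pow] at hsingle
  have hsum : ∑ j ∈ Finset.range (2*(k+1)),
      (D j z / j.factorial * t^j + D j z / j.factorial * (-t)^j)
      = (∑ j ∈ Finset.range (2*(k+1)), D j z / j.factorial * t^j)
      + ∑ j ∈ Finset.range (2*(k+1)), D j z / j.factorial * (-t)^j :=
    Finset.sum_add_distrib
  linarith

private lemma coeff_bound {a b : ℝ} (D : ℕ → ℝ → ℝ)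
    (hD : ∀ n, ∀ z ∈ Set.Ioo a b, HasDerivAt (D n) (D (n+1) z) z)
    (hpos : ∀ n, ∀ z ∈ Set.Ioo a b, 0 ≤ D (2*n) z)
    {x t₀ : ℝ} (hx : x ∈ Set.Ioo a b) (ht₀ : 0 ≤ t₀)
    (hlt : t₀ < min (x - a) (b - x)) :
    ∃ K ρ : ℝ, 0 ≤ K ∧ 0 ≤ ρ ∧ ρ < 1 ∧
      ∀ n : ℕ, |D n x| / n.factorial * t₀ ^ n ≤ K * ρ ^ n := by
  obtain ⟨hxa, hxb⟩ := hx
  rw [lt_min_iff] at hlt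
  obtain ⟨hl1, hl2⟩ := hlt
  set r : ℝ := min (x - a) (b - x) with hr
  have hr1 : r ≤ x - a := min_le_left _ _
  have hr2 : r ≤ b - x := min_le_right _ _
  have hrt : t₀ < r := lt_min hl1 hl2
  set δ : ℝ := (r - t₀)/4 with hδ
  have hδ0 : 0 < δ := by simp only [hδ]; linarith
  set t₂ : ℝ := t₀ + δ with ht₂
  have ht₂0 : 0 < t₂ := by simp only [ht₂]; linarith
  -- memberships
  have hmm : ∀ u : ℝ, -(t₀ + 2*δ) ≤ u → u ≤ t₀ + 2*δ → x + u ∈ Set.Ioo a b := by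
    intro u hu1 hu2
    constructor <;> simp only [hδ] at hu1 hu2 ⊢ <;> nlinarith
  have m1 : x - t₂ ∈ Set.Ioo a b := by
    have := hmm (-t₂) (by simp only [ht₂]; linarith) (by simp only [ht₂]; linarith)
    simpa [sub_eq_add_neg] using this
  have m2 : x + t₂ ∈ Set.Ioo a b := hmm t₂ (by simp only [ht₂]; linarith) (by simp only [ht₂]; linarith)
  have m3 : x - δ ∈ Set.Ioo a b := by
    have := hmm (-δ) (by linarith) (by linarith)
    simpa [sub_eq_add_neg] using this
  have m4 : x + δ ∈ Set.Ioo a b := hmm δ (by linarith) (by linarith)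
  have m5 : x + δ - t₂ ∈ Set.Ioo a b := by
    have := hmm (δ - t₂) (by simp only [ht₂]; linarith) (by simp only [ht₂]; linarith)
    simpa [add_sub_assoc] using this
  have m6 : x + δ + t₂ ∈ Set.Ioo a b := by
    have := hmm (δ + t₂) (by simp only [ht₂]; linarith) (by simp only [ht₂]; linarith)
    simpa [add_assoc] using this
  have m7 : x - δ - t₂ ∈ Set.Ioo a b := by
    have := hmm (-δ - t₂) (by simp only [ht₂]; linarith) (by simp only [ht₂]; linarith)
    simpa [sub_eq_add_neg, add_assoc, neg_add] using this
  have m8 : x - δ + t₂ ∈ Set.Ioo a b := by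
    have := hmm (-δ + t₂) (by simp only [ht₂]; linarith) (by simp only [ht₂]; linarith)
    simpa [sub_eq_add_neg, add_assoc] using this
  -- the constants
  set C0 : ℝ := (D 0 (x + t₂) + D 0 (x - t₂)) / 2 with hC0def
  set C1 : ℝ := (D 0 (x + δ + t₂) + D 0 (x + δ - t₂)) / 2 with hC1def
  set C2 : ℝ := (D 0 (x - δ + t₂) + D 0 (x - δ - t₂)) / 2 with hC2def
  have hg0 : ∀ w ∈ Set.Ioo a b, 0 ≤ D 0 w := fun w hw => hpos 0 w hw
  have hC00 : 0 ≤ C0 := by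
    have := hg0 _ m2; have := hg0 _ m1; simp only [hC0def]; linarith
  have hC10 : 0 ≤ C1 := by
    have := hg0 _ m6; have := hg0 _ m5; simp only [hC1def]; linarith
  have hC20 : 0 ≤ C2 := by
    have := hg0 _ m8; have := hg0 _ m7; simp only [hC2def]; linarith
  clear_value r δ t₂ C0 C1 C2
  refine ⟨C0 + (C1 + C2) * t₂ / δ, t₀ / t₂, ?_, ?_, ?_, ?_⟩
  · positivity
  · positivity
  · rw [div_lt_one ht₂0, ht₂]; linarith
  · intro n
    have hρ0 : 0 ≤ t₀ / t₂ := by positivity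
    have hKρn : 0 ≤ C0 * (t₀/t₂)^n := by positivity
    have hK2ρn : 0 ≤ ((C1 + C2) * t₂ / δ) * (t₀/t₂)^n := by positivity
    rcases Nat.even_or_odd n with hne | hno
    · obtain ⟨k, hk⟩ := hne
      have hn2 : n = 2*k := by omega
      subst hn2
      have heb := even_coeff_bound D hD hpos k m1 m2
      have habs : |D (2*k) x| = D (2*k) x := abs_of_nonneg (hpos k x ⟨hxa, hxb⟩)
      have hfac : (0:ℝ) < (2*k).factorial := by
        exact_mod_cast Nat.factorial_pos (2*k)
      -- D(2k) x / (2k)! ≤ C0 / t₂^(2k)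
      have h1 : D (2*k) x / (2*k).factorial ≤ C0 / t₂^(2*k) := by
        rw [le_div_iff₀ (pow_pos ht₂0 _), hC0def]
        exact heb
      have : |D (2*k) x| / (2*k).factorial * t₀^(2*k)
          ≤ (C0 / t₂^(2*k)) * t₀^(2*k) := by
        rw [habs]
        exact mul_le_mul_of_nonneg_right h1 (pow_nonneg ht₀ _)
      calc |D (2*k) x| / (2*k).factorial * t₀^(2*k)
          ≤ (C0 / t₂^(2*k)) * t₀^(2*k) := this
        _ = C0 * (t₀/t₂)^(2*k) := by
            rw [div_pow]; ring
        _ ≤ (C0 + (C1 + C2) * t₂ / δ) * (t₀/t₂)^(2*k) := by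
            apply mul_le_mul_of_nonneg_right _ (pow_nonneg hρ0 _)
            have : 0 ≤ (C1 + C2) * t₂ / δ := by positivity
            linarith
    · obtain ⟨k, hk⟩ := hno
      subst hk
      have hob := odd_deriv_bound D hD hpos k hδ0 m3 m4
      have hA := even_coeff_bound D hD hpos k (z := x + δ) (t := t₂) m5 m6
      have hB := even_coeff_bound D hD hpos k (z := x - δ) (t := t₂) m7 m8
      have hfac : (0:ℝ) < (2*k).factorial := by
        exact_mod_cast Nat.factorial_pos (2*k)
      have hfac1 : (0:ℝ) < (2*k+1).factorial := by
        exact_mod_cast Nat.factorial_pos (2*k+1)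
      have hA' : D (2*k) (x+δ) ≤ C1 * (2*k).factorial / t₂^(2*k) := by
        rw [le_div_iff₀ (pow_pos ht₂0 _)]
        rw [div_mul_eq_mul_div, div_le_iff₀ hfac] at hA
        calc D (2*k) (x+δ) * t₂^(2*k) ≤ (D 0 (x+δ+t₂) + D 0 (x+δ-t₂))/2 * (2*k).factorial := hA
          _ = C1 * (2*k).factorial := by rw [hC1def]
      have hB' : D (2*k) (x-δ) ≤ C2 * (2*k).factorial / t₂^(2*k) := by
        rw [le_div_iff₀ (pow_pos ht₂0 _)]
        rw [div_mul_eq_mul_div, div_le_iff₀ hfac] at hB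
        calc D (2*k) (x-δ) * t₂^(2*k) ≤ (D 0 (x-δ+t₂) + D 0 (x-δ-t₂))/2 * (2*k).factorial := hB
          _ = C2 * (2*k).factorial := by rw [hC2def]
      have hbound : |D (2*k+1) x| ≤ (C1 + C2) * (2*k).factorial / (t₂^(2*k) * δ) := by
        refine hob.trans ?_
        calc (D (2*k) (x+δ) + D (2*k) (x-δ))/δ
            ≤ ((C1 + C2) * (2*k).factorial / t₂^(2*k))/δ := by
              apply (div_le_div_iff_of_pos_right hδ0).mpr
              calc D (2*k) (x+δ) + D (2*k) (x-δ)
                  ≤ C1 * (2*k).factorial / t₂^(2*k) + C2 * (2*k).factorial / t₂^(2*k) :=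
                    add_le_add hA' hB'
                _ = (C1 + C2) * (2*k).factorial / t₂^(2*k) := by ring
          _ = (C1 + C2) * (2*k).factorial / (t₂^(2*k) * δ) := by rw [div_div]
      have ht₂ne : t₂ ≠ 0 := ne_of_gt ht₂0
      have hδne : δ ≠ 0 := ne_of_gt hδ0
      have hfacne : ((2*k).factorial : ℝ) ≠ 0 := ne_of_gt hfac
      calc |D (2*k+1) x| / (2*k+1).factorial * t₀^(2*k+1)
          ≤ ((C1 + C2) * (2*k).factorial / (t₂^(2*k) * δ)) / (2*k+1).factorial * t₀^(2*k+1) := by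
            apply mul_le_mul_of_nonneg_right _ (pow_nonneg ht₀ _)
            exact (div_le_div_iff_of_pos_right hfac1).mpr hbound
        _ ≤ ((C1 + C2) * (2*k).factorial / (t₂^(2*k) * δ)) / (2*k).factorial * t₀^(2*k+1) := by
            apply mul_le_mul_of_nonneg_right _ (pow_nonneg ht₀ _)
            apply div_le_div_of_nonneg_left (by positivity) hfac
            exact_mod_cast Nat.factorial_le (by omega)
        _ = ((C1 + C2) * t₂ / δ) * (t₀/t₂)^(2*k+1) := by
            have hpne : (t₂:ℝ)^(2*k) ≠ 0 := pow_ne_zero _ ht₂ne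
            rw [div_pow, pow_succ t₂ (2*k)]
            field_simp
        _ ≤ (C0 + (C1 + C2) * t₂ / δ) * (t₀/t₂)^(2*k+1) := by nlinarith [hKρn]

theorem analytic_of_even_derivs_nonneg (a b : ℝ) (hab : a < b) (g : ℝ → ℝ)
    (hg : ContDiffOn ℝ (⊤ : ℕ∞) g (Set.Ioo a b))
    (hpos : ∀ n : ℕ, ∀ x ∈ Set.Ioo a b,
      0 ≤ iteratedDerivWithin (2 * n) g (Set.Ioo a b) x) :
    AnalyticOnNhd ℝ g (Set.Ioo a b) ∧
    ∀ x ∈ Set.Ioo a b, ∀ y : ℝ, |y - x| < min (x - a) (b - x) →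
      Summable (fun n : ℕ =>
        iteratedDerivWithin n g (Set.Ioo a b) x / n.factorial * (y - x) ^ n) := by
  have hso : IsOpen (Set.Ioo a b) := isOpen_Ioo
  have hsu : UniqueDiffOn ℝ (Set.Ioo a b) := hso.uniqueDiffOn
  have hD : ∀ n : ℕ, ∀ z ∈ Set.Ioo a b,
      HasDerivAt (iteratedDerivWithin n g (Set.Ioo a b))
        (iteratedDerivWithin (n+1) g (Set.Ioo a b) z) z := by
    intro n z hz
    have hdiff : DifferentiableOn ℝ (iteratedDerivWithin n g (Set.Ioo a b)) (Set.Ioo a b) :=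
      hg.differentiableOn_iteratedDerivWithin (by exact_mod_cast ENat.coe_lt_top n) hsu
    have h2 := (hdiff z hz).hasDerivWithinAt.hasDerivAt (hso.mem_nhds hz)
    rwa [← iteratedDerivWithin_succ] at h2
  have hD0 : ∀ z : ℝ, iteratedDerivWithin 0 g (Set.Ioo a b) z = g z := fun z => by
    simp [iteratedDerivWithin_zero]
  set D : ℕ → ℝ → ℝ := fun n => iteratedDerivWithin n g (Set.Ioo a b) with hDdef
  have hD0' : ∀ z : ℝ, D 0 z = g z := hD0
  have hsummable : ∀ x ∈ Set.Ioo a b, ∀ y : ℝ, |y - x| < min (x - a) (b - x) →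
      Summable (fun n : ℕ => D n x / n.factorial * (y - x) ^ n) := by
    intro x hx y hy
    obtain ⟨K, ρ, hK, hρ0, hρ1, hbd⟩ := coeff_bound D hD hpos hx (abs_nonneg _) hy
    apply Summable.of_abs
    apply Summable.of_nonneg_of_le (fun n => abs_nonneg _) _
      ((summable_geometric_of_lt_one hρ0 hρ1).mul_left K)
    intro n
    calc |D n x / n.factorial * (y - x)^n| = |D n x| / n.factorial * |y - x|^n := by
          rw [abs_mul, abs_div, abs_pow, Nat.abs_cast]
      _ ≤ K * ρ^n := hbd n
  refine ⟨?_, hsummable⟩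
  intro x hx
  obtain ⟨hxa, hxb⟩ := hx
  set r : ℝ := min (x - a) (b - x) with hrdef
  have hr0 : 0 < r := lt_min (by linarith) (by linarith)
  have hr1 : r ≤ x - a := min_le_left _ _
  have hr2 : r ≤ b - x := min_le_right _ _
  have hIsub : Set.Ioo (x - r/4) (x + r/4) ⊆ Set.Ioo a b := fun z hz =>
    ⟨by linarith [hz.1], by linarith [hz.2]⟩
  have hD' : ∀ n, ∀ z ∈ Set.Ioo (x - r/4) (x + r/4), HasDerivAt (D n) (D (n+1) z) z :=
    fun n z hz => hD n z (hIsub hz)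
  have hxI : x ∈ Set.Ioo (x - r/4) (x + r/4) := ⟨by linarith, by linarith⟩
  obtain ⟨C, hC⟩ := (isCompact_Icc (a := x - 3/4*r) (b := x + 3/4*r)).exists_bound_of_continuousOn
    (hg.continuousOn.mono (fun w hw => ⟨by linarith [hw.1], by linarith [hw.2]⟩))
  have hC0 : 0 ≤ C := le_trans (norm_nonneg (g x)) (hC x ⟨by linarith, by linarith⟩)
  have hfacpos : ∀ m : ℕ, (0:ℝ) < (2*m).factorial := fun m => by
    exact_mod_cast Nat.factorial_pos (2*m)
  have hDB : ∀ m : ℕ, ∀ z ∈ Set.Ioo (x - r/4) (x + r/4),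
      D (2*m) z ≤ C * (2*m).factorial / (r/2)^(2*m) := by
    intro m z hz
    have hm1 : z - r/2 ∈ Set.Ioo a b := ⟨by linarith [hz.1], by linarith [hz.2]⟩
    have hm2 : z + r/2 ∈ Set.Ioo a b := ⟨by linarith [hz.1], by linarith [hz.2]⟩
    have heb := even_coeff_bound D hD hpos m hm1 hm2
    have hc1 : D 0 (z + r/2) ≤ C := by
      rw [hD0']
      exact le_trans (le_abs_self _)
        (hC _ ⟨by linarith [hz.1], by linarith [hz.2]⟩)
    have hc2 : D 0 (z - r/2) ≤ C := by
      rw [hD0']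
      exact le_trans (le_abs_self _)
        (hC _ ⟨by linarith [hz.1], by linarith [hz.2]⟩)
    rw [le_div_iff₀ (pow_pos (by linarith) _)]
    rw [div_mul_eq_mul_div, div_le_iff₀ (hfacpos m)] at heb
    have h3 : (D 0 (z + r/2) + D 0 (z - r/2))/2 * (2*m).factorial ≤ C * (2*m).factorial :=
      mul_le_mul_of_nonneg_right (by linarith) (hfacpos m).le
    linarith
  have hconv : ∀ y ∈ Set.Ioo (x - r/4) (x + r/4),
      HasSum (fun n => D n x / n.factorial * (y - x)^n) (g y) := by
    intro y hy
    have hsumm : Summable (fun n => D n x / n.factorial * (y - x)^n) := by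
      apply hsummable x ⟨hxa, hxb⟩ y
      rw [← hrdef, abs_lt]
      exact ⟨by linarith [hy.1], by linarith [hy.2]⟩
    have hq0 : 0 ≤ |y - x| / (r/2) := by positivity
    have hq1 : |y - x| / (r/2) < 1 := by
      rw [div_lt_one (by linarith), abs_lt]
      exact ⟨by linarith [hy.1], by linarith [hy.2]⟩
    have hrem : ∀ m : ℕ,
        |(∑ j ∈ Finset.range (2*m), D j x / j.factorial * (y - x)^j) - g y|
          ≤ C * (|y - x| / (r/2))^(2*m) := by
      intro m
      have hlow := taylor_lower_bound D hD' m
        (fun z hz => hpos m z (hIsub hz)) hxI y hy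
      have hupp := taylor_upper_bound D hD' m (C * (2*m).factorial / (r/2)^(2*m))
        (hDB m) hxI y hy
      have e1 : (C * (2*m).factorial / (r/2)^(2*m)) / (2*m).factorial * (y - x)^(2*m)
          = C * (|y - x| / (r/2))^(2*m) := by
        have h4 : ((2*m).factorial : ℝ) ≠ 0 := (hfacpos m).ne'
        have h5 : ((r:ℝ)/2)^(2*m) ≠ 0 := pow_ne_zero _ (ne_of_gt (by linarith))
        conv_rhs => rw [div_pow, (even_two_mul m).pow_abs]
        field_simp
      rw [e1] at hupp
      rw [hD0'] at hlow hupp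
      have hnn : 0 ≤ C * (|y - x| / (r/2))^(2*m) := by positivity
      rw [abs_le]
      constructor <;> linarith
    have h2m : Tendsto (fun m : ℕ => 2*m) atTop atTop :=
      StrictMono.tendsto_atTop (fun p q h => by omega)
    have ht1 : Tendsto (fun m : ℕ => ∑ j ∈ Finset.range (2*m), D j x / j.factorial * (y - x)^j)
        atTop (𝓝 (∑' n, D n x / n.factorial * (y - x)^n)) :=
      (hsumm.hasSum.tendsto_sum_nat).comp h2m
    have ht2 : Tendsto (fun m : ℕ => ∑ j ∈ Finset.range (2*m), D j x / j.factorial * (y - x)^j)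
        atTop (𝓝 (g y)) := by
      rw [tendsto_iff_dist_tendsto_zero]
      have hg0 : Tendsto (fun m : ℕ => C * (|y - x| / (r/2))^(2*m)) atTop (𝓝 0) := by
        have hpow : Tendsto (fun m : ℕ => ((|y - x| / (r/2))^2)^m) atTop (𝓝 0) :=
          tendsto_pow_atTop_nhds_zero_of_lt_one (by positivity) (by nlinarith)
        have := hpow.const_mul C
        simpa [← pow_mul, mul_zero] using this
      exact squeeze_zero (fun m => dist_nonneg)
        (fun m => by rw [Real.dist_eq]; exact hrem m) hg0
    have heq := tendsto_nhds_unique ht1 ht2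
    exact heq ▸ hsumm.hasSum
  have hball : HasFPowerSeriesOnBall g
      (FormalMultilinearSeries.ofScalars ℝ (fun n => D n x / n.factorial)) x
      (ENNReal.ofReal (r/4)) := by
    obtain ⟨K, ρ, hK, hρ0, hρ1, hbd⟩ := coeff_bound D hD hpos
      (x := x) (t₀ := r/4) ⟨hxa, hxb⟩ (by linarith) (by rw [← hrdef]; linarith)
    constructor
    · rw [ENNReal.ofReal_eq_coe_nnreal (by linarith : (0:ℝ) ≤ r/4)]
      apply FormalMultilinearSeries.le_radius_of_bound _ K
      intro n
      rw [FormalMultilinearSeries.ofScalars_norm]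
      calc |D n x / n.factorial| * ((⟨r/4, by linarith⟩ : NNReal) : ℝ)^n
          = |D n x| / n.factorial * (r/4)^n := by
            rw [abs_div, Nat.abs_cast]
        _ ≤ K * ρ^n := hbd n
        _ ≤ K * 1 := mul_le_mul_of_nonneg_left (pow_le_one₀ hρ0 hρ1.le) hK
        _ = K := mul_one K
    · exact ENNReal.ofReal_pos.mpr (by linarith)
    · intro y' hy'
      rw [Metric.emetric_ball, mem_ball_zero_iff, Real.norm_eq_abs, abs_lt] at hy'
      have hyI : x + y' ∈ Set.Ioo (x - r/4) (x + r/4) :=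
        ⟨by linarith [hy'.1], by linarith [hy'.2]⟩
      have hc := hconv (x + y') hyI
      rw [add_sub_cancel_left] at hc
      have happ : ∀ n : ℕ,
          (FormalMultilinearSeries.ofScalars ℝ (fun n => D n x / n.factorial) n
            fun _ => y') = D n x / n.factorial * y'^n := fun n => by
        rw [FormalMultilinearSeries.ofScalars_apply_eq, smul_eq_mul]
      simp only [happ]
      exact hc
  exact hball.analyticAt
end

section
/- If a smooth real function g on (a,b) satisfies, for all x ∈ (a,b) and all n ≥ 0, the log-convexity-type inequality (g^{(2n+1)}(x)/(2n+1+k)!)^2 ≤ (g^{(2n)}(x)/(2n+k)!) · (g^{(2n+2)}(x)/(2n+2+k)!), and if the even-index Taylor series Σ_n (g^{(2n)}(x)/(2n)!) h^{2n} has radius of convergence at least δ > 0 at x, then the full Taylor series Σ_n (g^{(n)}(x)/n!) h^n also has radius of convergence at least δ at x. -/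
lemma fact_add_le_aux (n k : ℕ) : (n + k).factorial ≤ (n + k) ^ k * n.factorial := by
  induction k with
  | zero => simp
  | succ k ih =>
    calc (n + (k + 1)).factorial = (n + k + 1) * (n + k).factorial := by
          rw [show n + (k + 1) = (n + k) + 1 from rfl, Nat.factorial_succ]
      _ ≤ (n + k + 1) * ((n + k) ^ k * n.factorial) := Nat.mul_le_mul_left _ ih
      _ ≤ (n + k + 1) * ((n + k + 1) ^ k * n.factorial) :=
          Nat.mul_le_mul_left _ (Nat.mul_le_mul_right _ (Nat.pow_le_pow_left (by omega) k))
      _ = (n + (k + 1)) ^ (k + 1) * n.factorial := by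
          rw [show n + (k + 1) = n + k + 1 from rfl, pow_succ]; ring

lemma summable_poly_geom_aux (k : ℕ) (q : ℝ) (hq : 0 ≤ q) (hq1 : q < 1) :
    Summable (fun n : ℕ => ((n : ℝ) + 1) ^ k * q ^ n) := by
  have hqn : ‖q‖ < 1 := by rwa [Real.norm_eq_abs, abs_of_nonneg hq]
  have h := fun m : ℕ => summable_pow_mul_geometric_of_norm_lt_one (R := ℝ) m hqn
  have hs : Summable (fun n : ℕ => ∑ m ∈ Finset.range (k + 1),
      ((n : ℝ) ^ m * q ^ n) * ((1 : ℝ) ^ (k - m) * (k.choose m : ℝ))) := by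
    apply summable_sum
    intro m _
    exact (h m).mul_right _
  refine hs.congr fun n => ?_
  rw [add_pow, Finset.sum_mul]
  refine Finset.sum_congr rfl fun m _ => ?_
  ring

theorem full_taylor_radius_of_even_radius (a b : ℝ) (hab : a < b) (g : ℝ → ℝ) (k : ℕ)
    (hg : ContDiffOn ℝ (⊤ : ℕ∞) g (Set.Ioo a b))
    (hpos : ∀ n : ℕ, ∀ x ∈ Set.Ioo a b,
      0 ≤ iteratedDerivWithin (2 * n) g (Set.Ioo a b) x)
    (hineq : ∀ x ∈ Set.Ioo a b, ∀ n : ℕ,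
      (iteratedDerivWithin (2 * n + 1) g (Set.Ioo a b) x / (2 * n + 1 + k).factorial) ^ 2 ≤
        (iteratedDerivWithin (2 * n) g (Set.Ioo a b) x / (2 * n + k).factorial) *
          (iteratedDerivWithin (2 * n + 2) g (Set.Ioo a b) x / (2 * n + 2 + k).factorial)) :
    ∀ x ∈ Set.Ioo a b, ∀ δ > (0 : ℝ),
      (∀ h : ℝ, |h| < δ →
        Summable (fun n : ℕ =>
          iteratedDerivWithin (2 * n) g (Set.Ioo a b) x / (2 * n).factorial * h ^ (2 * n))) →
      ∀ h : ℝ, |h| < δ →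
        Summable (fun n : ℕ =>
          iteratedDerivWithin n g (Set.Ioo a b) x / n.factorial * h ^ n) := by
  intro x hx δ hδ hsum h hh
  set S := Set.Ioo a b with hS
  set d : ℕ → ℝ := fun m => iteratedDerivWithin m g S x with hd
  set f : ℕ → ℝ := fun m => d m / m.factorial * h ^ m with hf
  -- choose an intermediate radius r
  set r : ℝ := (|h| + δ) / 2 with hrdef
  have habs : 0 ≤ |h| := abs_nonneg h
  have hhr : |h| < r := by rw [hrdef]; linarith
  have hr0 : 0 < r := lt_of_le_of_lt habs hhr
  have hrδ : r < δ := by rw [hrdef]; linarith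
  clear_value r
  -- summability at r
  have hu : Summable (fun n : ℕ => d (2 * n) / (2 * n).factorial * r ^ (2 * n)) := by
    have := hsum r (by rwa [abs_of_pos hr0])
    exact this
  have hdnn : ∀ n : ℕ, 0 ≤ d (2 * n) := fun n => hpos n x hx
  have hunn : ∀ n : ℕ, 0 ≤ d (2 * n) / (2 * n).factorial * r ^ (2 * n) := by
    intro n
    apply mul_nonneg (div_nonneg (hdnn n) (by positivity)) (by positivity)
  set M : ℝ := ∑' n, d (2 * n) / (2 * n).factorial * r ^ (2 * n) with hMdef
  have hM : ∀ n : ℕ, d (2 * n) / (2 * n).factorial * r ^ (2 * n) ≤ M :=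
    fun n => Summable.le_tsum hu n (fun j _ => hunn j)
  have hM0 : 0 ≤ M := tsum_nonneg hunn
  -- e_n ≤ M where e_n uses the shifted factorial
  have he : ∀ n : ℕ, d (2 * n) / (2 * n + k).factorial * r ^ (2 * n) ≤ M := by
    intro n
    refine le_trans ?_ (hM n)
    apply mul_le_mul_of_nonneg_right _ (by positivity)
    apply div_le_div_of_nonneg_left (hdnn n) (by positivity)
    exact_mod_cast Nat.factorial_le (by omega)
  -- Claim A : |d (2n+1)| / (2n+1+k)! * r^(2n+1) ≤ M
  have hA : ∀ n : ℕ, |d (2 * n + 1)| / (2 * n + 1 + k).factorial * r ^ (2 * n + 1) ≤ M := by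
    intro n
    set w : ℝ := d (2 * n + 1) / (2 * n + 1 + k).factorial * r ^ (2 * n + 1) with hw
    have hw2 : w ^ 2 ≤ M ^ 2 := by
      have h1 := hineq x hx n
      have h2 : w ^ 2 = (d (2 * n + 1) / (2 * n + 1 + k).factorial) ^ 2 *
          (r ^ (2 * n) * r ^ (2 * n + 2)) := by
        rw [hw]; ring
      have h3 : (d (2 * n) / (2 * n + k).factorial * r ^ (2 * n)) *
          (d (2 * n + 2) / (2 * n + 2 + k).factorial * r ^ (2 * n + 2)) ≤ M * M := by
        have e1 := he n
        have h22 : 2 * (n + 1) = 2 * n + 2 := by ring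
        have e2' : d (2 * n + 2) / (2 * n + 2 + k).factorial * r ^ (2 * n + 2) ≤ M := by
          have e2 := he (n + 1); rwa [h22] at e2
        have n1 : 0 ≤ d (2 * n) / (2 * n + k).factorial * r ^ (2 * n) :=
          mul_nonneg (div_nonneg (hdnn n) (by positivity)) (by positivity)
        have n2 : 0 ≤ d (2 * n + 2) / (2 * n + 2 + k).factorial * r ^ (2 * n + 2) := by
          have hnn := hpos (n + 1) x hx
          rw [h22] at hnn
          exact mul_nonneg (div_nonneg hnn (by positivity)) (by positivity)
        exact mul_le_mul e1 e2' n2 hM0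
      calc w ^ 2 = (d (2 * n + 1) / (2 * n + 1 + k).factorial) ^ 2 *
            (r ^ (2 * n) * r ^ (2 * n + 2)) := h2
        _ ≤ ((d (2 * n) / (2 * n + k).factorial) *
            (d (2 * n + 2) / (2 * n + 2 + k).factorial)) *
            (r ^ (2 * n) * r ^ (2 * n + 2)) := by
            apply mul_le_mul_of_nonneg_right h1 (by positivity)
        _ = (d (2 * n) / (2 * n + k).factorial * r ^ (2 * n)) *
            (d (2 * n + 2) / (2 * n + 2 + k).factorial * r ^ (2 * n + 2)) := by ring
        _ ≤ M * M := h3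
        _ = M ^ 2 := by ring
    have habsw : |w| ≤ M := by
      have := Real.sqrt_le_sqrt hw2
      rwa [Real.sqrt_sq_eq_abs, Real.sqrt_sq hM0] at this
    calc |d (2 * n + 1)| / (2 * n + 1 + k).factorial * r ^ (2 * n + 1)
        = |w| := by
          rw [hw, abs_mul, abs_div, abs_of_nonneg (by positivity : (0:ℝ) ≤ ((2 * n + 1 + k).factorial : ℝ)),
            abs_of_nonneg (by positivity : (0:ℝ) ≤ r ^ (2 * n + 1))]
      _ ≤ M := habsw
  -- q := |h| / r
  set q : ℝ := |h| / r with hqdef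
  have hq0 : 0 ≤ q := div_nonneg habs hr0.le
  have hq1 : q < 1 := (div_lt_one hr0).mpr hhr
  -- bound on odd terms
  have hodd_bound : ∀ n : ℕ,
      |f (2 * n + 1)| ≤ (M * (k + 3 : ℝ) ^ k * q) * (((n : ℝ) + 1) ^ k * (q ^ 2) ^ n) := by
    intro n
    have heq : |f (2 * n + 1)| =
        (|d (2 * n + 1)| / (2 * n + 1 + k).factorial * r ^ (2 * n + 1)) *
          (((2 * n + 1 + k).factorial : ℝ) / (2 * n + 1).factorial) * q ^ (2 * n + 1) := by
      rw [hf, abs_mul, abs_div,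
        abs_of_nonneg (by positivity : (0:ℝ) ≤ ((2 * n + 1).factorial : ℝ)),
        abs_pow, hqdef, div_pow]
      have hfk : ((2 * n + 1 + k).factorial : ℝ) ≠ 0 := by positivity
      have hf1 : ((2 * n + 1).factorial : ℝ) ≠ 0 := by positivity
      have hrn : r ^ (2 * n + 1) ≠ 0 := by positivity
      field_simp
    rw [heq]
    have hb1 : (|d (2 * n + 1)| / (2 * n + 1 + k).factorial * r ^ (2 * n + 1)) *
          (((2 * n + 1 + k).factorial : ℝ) / (2 * n + 1).factorial) * q ^ (2 * n + 1) ≤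
        M * (((2 * n + 1 + k).factorial : ℝ) / (2 * n + 1).factorial) * q ^ (2 * n + 1) := by
      apply mul_le_mul_of_nonneg_right _ (by positivity)
      apply mul_le_mul_of_nonneg_right (hA n) (by positivity)
    refine hb1.trans ?_
    have hfact : ((2 * n + 1 + k).factorial : ℝ) / (2 * n + 1).factorial ≤
        ((2 * n + 1 + k : ℕ) : ℝ) ^ k := by
      rw [div_le_iff₀ (by positivity)]
      exact_mod_cast fact_add_le_aux (2 * n + 1) k
    have hbase : ((2 * n + 1 + k : ℕ) : ℝ) ^ k ≤ ((k + 3 : ℝ) * ((n : ℝ) + 1)) ^ k := by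
      apply pow_le_pow_left₀ (by positivity)
      push_cast
      nlinarith [Nat.cast_nonneg (α := ℝ) n, Nat.cast_nonneg (α := ℝ) k]
    have hqpow : q ^ (2 * n + 1) = q * (q ^ 2) ^ n := by
      rw [← pow_mul]; ring
    calc M * (((2 * n + 1 + k).factorial : ℝ) / (2 * n + 1).factorial) * q ^ (2 * n + 1)
        ≤ M * (((k + 3 : ℝ) * ((n : ℝ) + 1)) ^ k) * q ^ (2 * n + 1) := by
          apply mul_le_mul_of_nonneg_right _ (by positivity)
          exact mul_le_mul_of_nonneg_left (hfact.trans hbase) hM0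
      _ = (M * (k + 3 : ℝ) ^ k * q) * (((n : ℝ) + 1) ^ k * (q ^ 2) ^ n) := by
          rw [hqpow, mul_pow]; ring
  -- summability of the odd part
  have hq2 : q ^ 2 < 1 := by nlinarith
  have hq2n : (0 : ℝ) ≤ q ^ 2 := by positivity
  have hgeo : Summable (fun n : ℕ => (M * (k + 3 : ℝ) ^ k * q) *
      (((n : ℝ) + 1) ^ k * (q ^ 2) ^ n)) :=
    (summable_poly_geom_aux k (q ^ 2) hq2n hq2).mul_left _
  have hodd_abs : Summable (fun n : ℕ => |f (2 * n + 1)|) := by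
    apply Summable.of_nonneg_of_le (fun n => abs_nonneg _) hodd_bound hgeo
  have hodd : Summable (fun n : ℕ => f (2 * n + 1)) := summable_abs_iff.mp hodd_abs
  have heven : Summable (fun n : ℕ => f (2 * n)) := hsum h hh
  exact heven.even_add_odd hodd
end

section
/- Suppose a real function f on (0,∞) satisfies, for some γ ≥ 0 and some positive measure μ on [0,∞) with ∫ (1+λ)^{−(k+1)} dμ(λ) < ∞, the identity f^[k](x_1,…,x_{k+1}) = γ + ∫_{[0,∞)} dμ(λ)/∏_{i=1}^{k+1}(x_i+λ) for all pairwise distinct x_1,…,x_{k+1} ∈ (0,∞). Then for every m > k and pairwise distinct x_1,…,x_{m+1} ∈ (0,∞), f^[m](x_1,…,x_{m+1}) = (−1)^{m−k} ∫_{[0,∞)} dμ(λ)/∏_{i=1}^{m+1}(x_i+λ). In particular, (−1)^{m−k} f^[m] ≥ 0 everywhere. -/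
open MeasureTheory

lemma prod_pos_aux {m : ℕ} (x : Fin (m + 1) → ℝ) (hx : ∀ i, 0 < x i)
    {lam : ℝ} (hlam : 0 ≤ lam) : 0 < ∏ i, (x i + lam) :=
  Finset.prod_pos fun i _ => by linarith [hx i]

lemma integrable_aux {k : ℕ} {μ : Measure ℝ}
    (hint : Integrable (fun lam => ((1 + lam) ^ (k + 1))⁻¹)
      (μ.restrict (Set.Ici (0 : ℝ))))
    {m : ℕ} (hm : k ≤ m) (x : Fin (m + 1) → ℝ) (hx : ∀ i, 0 < x i) :
    Integrable (fun lam => (∏ i, (x i + lam))⁻¹) (μ.restrict (Set.Ici (0 : ℝ))) := by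
  set c : ℝ := ∏ i, min (x i) 1 with hc_def
  have hc : 0 < c := Finset.prod_pos fun i _ => lt_min (hx i) one_pos
  apply Integrable.mono (hint.const_mul c⁻¹)
  · exact (Measurable.inv (Finset.measurable_prod Finset.univ
      (fun i _ => measurable_const.add measurable_id))).aestronglyMeasurable
  · rw [ae_restrict_iff' measurableSet_Ici]
    filter_upwards with lam hlam
    have hlam' : (0:ℝ) ≤ lam := hlam
    have h1lam : (0:ℝ) < 1 + lam := by linarith
    have hpos := prod_pos_aux x hx hlam'
    have hbound : c * (1 + lam) ^ (k + 1) ≤ ∏ i, (x i + lam) := by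
      calc c * (1 + lam) ^ (k + 1) ≤ c * (1 + lam) ^ (m + 1) := by
            apply mul_le_mul_of_nonneg_left _ hc.le
            exact pow_le_pow_right₀ (by linarith) (by omega)
        _ = ∏ i : Fin (m + 1), (min (x i) 1 * (1 + lam)) := by
            rw [Finset.prod_mul_distrib, hc_def]
            simp [Finset.prod_const, Finset.card_univ]
        _ ≤ ∏ i, (x i + lam) := by
            apply Finset.prod_le_prod
            · intro i _
              exact mul_nonneg (le_of_lt (lt_min (hx i) one_pos)) h1lam.le
            · intro i _
              have h1 : min (x i) 1 ≤ x i := min_le_left _ _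
              have h2 : min (x i) 1 ≤ 1 := min_le_right _ _
              have h3 : 0 ≤ min (x i) 1 := le_of_lt (lt_min (hx i) one_pos)
              nlinarith
    have hpos2 : (0:ℝ) < c * (1 + lam) ^ (k + 1) := by positivity
    have hineq : (∏ i, (x i + lam))⁻¹ ≤ (c * (1 + lam) ^ (k + 1))⁻¹ :=
      inv_anti₀ hpos2 hbound
    rw [Real.norm_eq_abs, Real.norm_eq_abs, abs_of_nonneg (inv_nonneg.mpr hpos.le),
      abs_of_nonneg (by positivity)]
    rwa [mul_inv] at hineq

lemma step_aux {k m : ℕ} (hm : k ≤ m) (f : ℝ → ℝ) (μ : Measure ℝ)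
    (hint : Integrable (fun lam => ((1 + lam) ^ (k + 1))⁻¹)
      (μ.restrict (Set.Ici (0 : ℝ))))
    (c s : ℝ)
    (h : ∀ x : Fin (m + 1) → ℝ, Function.Injective x →
      (∀ i, x i ∈ Set.Ioi (0 : ℝ)) →
      divDiff f m x = c + s * ∫ lam in Set.Ici (0 : ℝ), (∏ i, (x i + lam))⁻¹ ∂μ) :
    ∀ x : Fin (m + 2) → ℝ, Function.Injective x →
      (∀ i, x i ∈ Set.Ioi (0 : ℝ)) →
      divDiff f (m + 1) x =
        0 + (-s) * ∫ lam in Set.Ici (0 : ℝ), (∏ i, (x i + lam))⁻¹ ∂μ := by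
  intro x hinj hx
  have hx' : ∀ i, 0 < x i := fun i => hx i
  have hinj1 : Function.Injective (fun i : Fin (m + 1) => x i.castSucc) :=
    hinj.comp (Fin.castSucc_injective _)
  have hinj2 : Function.Injective (fun i : Fin (m + 1) => x i.succ) :=
    hinj.comp (Fin.succ_injective _)
  have hpos1 : ∀ i : Fin (m + 1), (fun i : Fin (m+1) => x i.castSucc) i ∈ Set.Ioi (0:ℝ) :=
    fun i => hx _
  have hpos2 : ∀ i : Fin (m + 1), (fun i : Fin (m+1) => x i.succ) i ∈ Set.Ioi (0:ℝ) :=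
    fun i => hx _
  have hI1 : Integrable (fun lam => (∏ i : Fin (m+1), (x i.castSucc + lam))⁻¹)
      (μ.restrict (Set.Ici (0:ℝ))) :=
    integrable_aux hint hm (fun i : Fin (m+1) => x i.castSucc) (fun i => hx' _)
  have hI2 : Integrable (fun lam => (∏ i : Fin (m+1), (x i.succ + lam))⁻¹)
      (μ.restrict (Set.Ici (0:ℝ))) :=
    integrable_aux hint hm (fun i : Fin (m+1) => x i.succ) (fun i => hx' _)
  have hIfull := integrable_aux hint (hm.trans (Nat.le_succ m)) x hx'
  have h0ne : (0 : Fin (m + 2)) ≠ Fin.last (m + 1) := by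
    simp [Fin.ext_iff]
  have hne : x 0 - x (Fin.last (m + 1)) ≠ 0 :=
    sub_ne_zero.mpr (fun hh => h0ne (hinj hh))
  have key : (∫ lam in Set.Ici (0:ℝ), (∏ i : Fin (m+1), (x i.castSucc + lam))⁻¹ ∂μ)
      - (∫ lam in Set.Ici (0:ℝ), (∏ i : Fin (m+1), (x i.succ + lam))⁻¹ ∂μ)
      = (x (Fin.last (m+1)) - x 0) *
        ∫ lam in Set.Ici (0:ℝ), (∏ i, (x i + lam))⁻¹ ∂μ := by
    rw [← integral_sub hI1 hI2, ← integral_const_mul]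
    apply setIntegral_congr_fun measurableSet_Ici
    intro lam hlam
    have hlam' : (0:ℝ) ≤ lam := hlam
    have hA : (0:ℝ) < ∏ i : Fin (m+1), (x i.castSucc + lam) :=
      prod_pos_aux _ (fun i => hx' _) hlam'
    have hB : (0:ℝ) < ∏ i : Fin (m+1), (x i.succ + lam) :=
      prod_pos_aux _ (fun i => hx' _) hlam'
    have hfull1 : ∏ i : Fin (m+2), (x i + lam)
        = (∏ i : Fin (m+1), (x i.castSucc + lam)) * (x (Fin.last (m+1)) + lam) :=
      Fin.prod_univ_castSucc _
    have hfull2 : ∏ i : Fin (m+2), (x i + lam)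
        = (x 0 + lam) * ∏ i : Fin (m+1), (x i.succ + lam) :=
      Fin.prod_univ_succ _
    have hfullpos : (0:ℝ) < ∏ i : Fin (m+2), (x i + lam) :=
      prod_pos_aux x hx' hlam'
    have hb : x (Fin.last (m+1)) + lam ≠ 0 := by
      have := hx' (Fin.last (m+1)); linarith
    have ha : x (0 : Fin (m+2)) + lam ≠ 0 := by
      have := hx' 0; linarith
    have e1 : (∏ i : Fin (m+1), (x i.castSucc + lam))⁻¹
        = (x (Fin.last (m+1)) + lam) * (∏ i : Fin (m+2), (x i + lam))⁻¹ := by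
      rw [hfull1, mul_inv]
      field_simp
    have e2 : (∏ i : Fin (m+1), (x i.succ + lam))⁻¹
        = (x 0 + lam) * (∏ i : Fin (m+2), (x i + lam))⁻¹ := by
      rw [hfull2, mul_inv, ← mul_assoc, mul_inv_cancel₀ ha, one_mul]
    show (∏ i : Fin (m+1), (x i.castSucc + lam))⁻¹ - (∏ i : Fin (m+1), (x i.succ + lam))⁻¹
        = (x (Fin.last (m+1)) - x 0) * (∏ i : Fin (m+2), (x i + lam))⁻¹
    rw [e1, e2]
    ring
  have hrec : divDiff f (m + 1) x =
      (divDiff f m (fun i => x i.castSucc) - divDiff f m (fun i => x i.succ)) /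
        (x 0 - x (Fin.last (m + 1))) := rfl
  rw [hrec, h _ hinj1 hpos1, h _ hinj2 hpos2]
  have : c + s * (∫ lam in Set.Ici (0:ℝ), (∏ i : Fin (m+1), (x i.castSucc + lam))⁻¹ ∂μ)
      - (c + s * ∫ lam in Set.Ici (0:ℝ), (∏ i : Fin (m+1), (x i.succ + lam))⁻¹ ∂μ)
      = s * ((x (Fin.last (m+1)) - x 0) *
        ∫ lam in Set.Ici (0:ℝ), (∏ i, (x i + lam))⁻¹ ∂μ) := by
    rw [← key]; ring
  rw [this]
  field_simp
  ring

open MeasureTheory in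
theorem divDiff_higher_of_integral_representation (k : ℕ) (f : ℝ → ℝ)
    (γ : ℝ) (hγ : 0 ≤ γ) (μ : Measure ℝ) (hsupp : μ (Set.Ici (0 : ℝ))ᶜ = 0)
    (hint : Integrable (fun lam => ((1 + lam) ^ (k + 1))⁻¹)
      (μ.restrict (Set.Ici (0 : ℝ))))
    (hrep : ∀ x : Fin (k + 1) → ℝ, Function.Injective x →
      (∀ i, x i ∈ Set.Ioi (0 : ℝ)) →
      divDiff f k x = γ + ∫ lam in Set.Ici (0 : ℝ), (∏ i, (x i + lam))⁻¹ ∂μ) :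
    ∀ m, k < m → ∀ x : Fin (m + 1) → ℝ, Function.Injective x →
      (∀ i, x i ∈ Set.Ioi (0 : ℝ)) →
      divDiff f m x =
        (-1) ^ (m - k) * ∫ lam in Set.Ici (0 : ℝ), (∏ i, (x i + lam))⁻¹ ∂μ ∧
      0 ≤ (-1) ^ (m - k) * divDiff f m x := by
  have main : ∀ m, k + 1 ≤ m → ∀ x : Fin (m + 1) → ℝ, Function.Injective x →
      (∀ i, x i ∈ Set.Ioi (0 : ℝ)) →
      divDiff f m x =
        (-1) ^ (m - k) * ∫ lam in Set.Ici (0 : ℝ), (∏ i, (x i + lam))⁻¹ ∂μ := by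
    intro m hm
    induction m, hm using Nat.le_induction with
    | base =>
      intro x hinj hx
      have hrep' : ∀ x : Fin (k + 1) → ℝ, Function.Injective x →
          (∀ i, x i ∈ Set.Ioi (0 : ℝ)) →
          divDiff f k x = γ + 1 * ∫ lam in Set.Ici (0 : ℝ), (∏ i, (x i + lam))⁻¹ ∂μ := by
        intro x hinj hx
        rw [one_mul]; exact hrep x hinj hx
      have := step_aux le_rfl f μ hint γ 1 hrep' x hinj hx
      rw [this]
      have hk : k + 1 - k = 1 := by omega
      rw [hk]
      ring
    | succ n hn ih =>
      intro x hinj hx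
      have ih' : ∀ x : Fin (n + 1) → ℝ, Function.Injective x →
          (∀ i, x i ∈ Set.Ioi (0 : ℝ)) →
          divDiff f n x = 0 + (-1) ^ (n - k) *
            ∫ lam in Set.Ici (0 : ℝ), (∏ i, (x i + lam))⁻¹ ∂μ := by
        intro x hinj hx
        rw [zero_add]; exact ih x hinj hx
      have := step_aux (by omega : k ≤ n) f μ hint 0 ((-1) ^ (n - k)) ih' x hinj hx
      rw [this]
      have hnk : n + 1 - k = (n - k) + 1 := by omega
      rw [hnk, pow_succ]
      ring
  intro m hm x hinj hx
  have heq := main m hm x hinj hx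
  have hintnn : 0 ≤ ∫ lam in Set.Ici (0 : ℝ), (∏ i, (x i + lam))⁻¹ ∂μ := by
    apply setIntegral_nonneg measurableSet_Ici
    intro lam hlam
    exact inv_nonneg.mpr (prod_pos_aux x (fun i => hx i) hlam).le
  refine ⟨heq, ?_⟩
  rw [heq, ← mul_assoc, ← pow_add]
  have : Even (m - k + (m - k)) := ⟨m - k, rfl⟩
  rw [this.neg_one_pow, one_mul]
  exact hintnn
end

section
/- If a real function f on ℝ has the property that for all α_1,…,α_{k−1} ∈ ℝ there exist a polynomial P of degree ≤ k−2 and an affine function g(x) = c + dx with d ≥ 0 such that f(x) = P(x) + (∏_{l=1}^{k−1}(x−α_l)) g(x), then f is a polynomial of degree ≤ k with nonnegative coefficient of x^k, and conversely. -/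
open Polynomial

private lemma coeff_aux (k : ℕ) (hk : 1 ≤ k) (R : Polynomial ℝ) (hR : R.Monic)
    (hdeg : R.natDegree = k - 1) (c d : ℝ) :
    (R * (Polynomial.C c + Polynomial.C d * Polynomial.X)).coeff k = d := by
  have h1 : R.coeff k = 0 := coeff_eq_zero_of_natDegree_lt (by omega)
  have h2 : R.coeff (k - 1) = 1 := by
    rw [← hdeg]; exact hR.coeff_natDegree
  have h3 : R * (C d * X) = C d * (R * X) := by ring
  rw [mul_add, coeff_add, coeff_mul_C, h1, h3, coeff_C_mul,
    show k = (k - 1) + 1 by omega, coeff_mul_X, h2]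
  ring

private lemma lin_deg (c d : ℝ) :
    (Polynomial.C c + Polynomial.C d * Polynomial.X).natDegree ≤ 1 := by
  refine (natDegree_add_le _ _).trans (max_le (by simp) ?_)
  exact (natDegree_C_mul_le d X).trans (by simp)

private lemma prod_lemma {n : ℕ} (α : Fin n → ℝ) :
    ((∏ l, (Polynomial.X - Polynomial.C (α l))) : Polynomial ℝ).Monic ∧
    ((∏ l, (Polynomial.X - Polynomial.C (α l))) : Polynomial ℝ).natDegree = n := by
  constructor
  · exact monic_prod_of_monic _ _ fun i _ => monic_X_sub_C _
  · rw [natDegree_prod_of_monic _ _ fun i _ => monic_X_sub_C _]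
    simp [natDegree_X_sub_C]

theorem operator_ktone_on_real_line_iff_polynomial (k : ℕ) (hk : 1 ≤ k) (f : ℝ → ℝ) :
    (∀ α : Fin (k - 1) → ℝ, ∃ P : Polynomial ℝ, P.natDegree ≤ k - 2 ∧
      ∃ c d : ℝ, 0 ≤ d ∧
        ∀ x, f x = P.eval x + (∏ l, (x - α l)) * (c + d * x)) ↔
    ∃ Q : Polynomial ℝ, Q.natDegree ≤ k ∧ 0 ≤ Q.coeff k ∧ ∀ x, f x = Q.eval x := by
  constructor
  · intro h
    obtain ⟨P, hP, c, d, hd, hf⟩ := h (fun _ => 0)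
    set R : Polynomial ℝ := ∏ _l : Fin (k - 1), (X - C (0 : ℝ)) with hRdef
    have hpl := prod_lemma (fun _ : Fin (k - 1) => (0 : ℝ))
    have hRm : R.Monic := hpl.1
    have hRdeg : R.natDegree = k - 1 := hpl.2
    have hPk : P.coeff k = 0 := coeff_eq_zero_of_natDegree_lt (by omega)
    refine ⟨P + R * (C c + C d * X), ?_, ?_, ?_⟩
    · refine (natDegree_add_le _ _).trans (max_le (by omega) ?_)
      refine (natDegree_mul_le).trans ?_
      have := lin_deg c d
      omega
    · rw [coeff_add, hPk, coeff_aux k hk R hRm hRdeg c d]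
      linarith
    · intro x
      have hR : eval x R = ∏ l : Fin (k - 1), (x - (0 : ℝ)) := by
        simp [hRdef, eval_prod]
      rw [hf x, eval_add, eval_mul, hR, eval_add, eval_mul, eval_C, eval_C, eval_X]
  · rintro ⟨Q, hQdeg, hQk, hfQ⟩ α
    set R : Polynomial ℝ := ∏ l, (X - C (α l)) with hRdef
    obtain ⟨hRm, hRdeg⟩ := prod_lemma α
    set S := Q /ₘ R with hSdef
    set P := Q %ₘ R with hPdef
    have hQeq : P + R * S = Q := modByMonic_add_div Q R
    have hSdeg : S.natDegree ≤ 1 := by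
      rw [hSdef, natDegree_divByMonic Q hRm, hRdeg]; omega
    have hPdeg : P.natDegree ≤ k - 2 := by
      by_cases h0 : P = 0
      · simp [h0]
      · have hlt : P.natDegree < R.natDegree :=
          natDegree_lt_natDegree h0 (degree_modByMonic_lt Q hRm)
        have hR' : R.natDegree = k - 1 := hRdeg
        omega
    set d := S.coeff 1 with hdd
    set c := S.coeff 0 with hcc
    have hSX : S = C d * X + C c := by
      apply eq_X_add_C_of_degree_le_one
      exact (degree_le_natDegree).trans (by exact_mod_cast hSdeg)
    have hdnn : 0 ≤ d := by
      have hQc : Q.coeff k = d := by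
        rw [← hQeq, coeff_add, coeff_eq_zero_of_natDegree_lt (show P.natDegree < k by omega),
          show R * S = R * (C c + C d * X) by rw [hSX]; ring,
          coeff_aux k hk R hRm hRdeg]
        ring
      linarith [hQc ▸ hQk]
    refine ⟨P, hPdeg, c, d, hdnn, fun x => ?_⟩
    have hR : eval x R = ∏ l, (x - α l) := by simp [hRdef, eval_prod]
    have hS : eval x S = c + d * x := by rw [hSX]; simp; ring
    rw [hfQ x, ← hQeq, eval_add, eval_mul, hR, hS]
end
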